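/- arXiv:1109.0191 — 10 statements merged into one kernel-verified Lean document; each statement's English description precedes it below -/
import Mathlib

section
/- Let g ∈ Equiv.Perm (Fin n) have disjoint cycle decomposition into t cycles of lengths ℓ 1, …, ℓ t and let G = ⟨g⟩. Then dim P(G) equals the number (Set.ncard) of complex numbers x ∈ ℂ with x ≠ 1 such that x ^ (ℓ i) = 1 for some i ∈ {1, …, t}. -/
/-!
The permutation matrices of `⟨g⟩` are the powers of `A = M(g)`, and they all lie on the affine
hyperplane "row `i` sums to `1`", which avoids the origin; hence `dim P(⟨g⟩)` is one less than
`dim span {A ^ k}`, i.e. than the degree of the minimal polynomial of `A`. As `A ^ (orderOf g) = 1`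
this polynomial is separable, so its degree is the number of its complex roots, the eigenvalues of
`A`. These are the `x` with `x ^ p = 1` for `p` the length of a cycle of `g`, fixed points counting
as cycles of length `1`: the eigenvector of such an `x` is `∑_{m < p} x ^ m e_{g^m a}` on a cycle
through `a`, and conversely `∏_a (X ^ p_a - 1)` annihilates `A`.
-/

/-- The permutation polytope of a subgroup `G` of permutations of `Fin n`:
the convex hull of the permutation matrices of elements of `G`. -/
noncomputable def permPolytope (n : ℕ) (G : Subgroup (Equiv.Perm (Fin n))) :
    Set (Matrix (Fin n) (Fin n) ℝ) :=
  convexHull ℝ {M : Matrix (Fin n) (Fin n) ℝ | ∃ σ ∈ G, M = σ.permMatrix ℝ}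

open Polynomial Module Submodule Matrix Finset

theorem Finset.sum_range_add_one_eq_sum_range {M : Type*} [AddCommMonoid M] [IsRightCancelAdd M]
    (f : ℕ → M) {n : ℕ} (h : f n = f 0) :
    ∑ m ∈ range n, f (m + 1) = ∑ m ∈ range n, f m :=
  add_right_cancel (b := f 0) (by rw [← sum_range_succ', sum_range_succ, h])

theorem finrank_vectorSpan_add_one {K V : Type*} [DivisionRing K] [AddCommGroup V] [Module K V]
    [FiniteDimensional K V] {S : Set V} (f : V →ₗ[K] K) (hf : ∀ s ∈ S, f s = 1)
    (hS : S.Nonempty) : finrank K (vectorSpan K S) + 1 = finrank K (span K S) := by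
  obtain ⟨p, hp⟩ := hS
  have hp0 : p ≠ 0 := fun h => by simpa [h] using hf p hp
  have hsup : vectorSpan K S ⊔ K ∙ p = span K S := by
    apply le_antisymm
    · refine sup_le ?_ (span_mono (by simpa using hp))
      rw [vectorSpan_def, span_le]
      rintro _ ⟨s, hs, t, ht, rfl⟩
      exact sub_mem (subset_span hs) (subset_span ht)
    · rw [span_le]
      intro s hs
      rw [← sub_add_cancel s p]
      exact add_mem_sup (vsub_mem_vectorSpan K hs hp) (mem_span_singleton_self p)
  have hdisj : Disjoint (vectorSpan K S) (K ∙ p) := by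
    refine (disjoint_span_singleton' hp0).2 fun hmem => ?_
    have hker : vectorSpan K S ≤ LinearMap.ker f := by
      rw [vectorSpan_def, span_le]
      rintro _ ⟨s, hs, t, ht, rfl⟩
      simp [hf s hs, hf t ht]
    simpa [hf p hp] using hker hmem
  have := finrank_sup_add_finrank_inf_eq (vectorSpan K S) (K ∙ p)
  rw [hsup, disjoint_iff.1 hdisj, finrank_bot, finrank_span_singleton hp0] at this
  omega

theorem finrank_span_range_pow {K A : Type*} [Field K] [Ring A] [Algebra K A] (x : A) :
    finrank K (span K (Set.range (x ^ · : ℕ → A))) = (minpoly K x).natDegree := by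
  have hspan : span K (Set.range (x ^ · : ℕ → A)) = Subalgebra.toSubmodule (aeval x).range := by
    rw [← Algebra.adjoin_singleton_eq_range_aeval, Algebra.adjoin_eq_span,
      ← Submonoid.powers_eq_closure, Submonoid.coe_powers]
  have hker : RingHom.ker (aeval x).rangeRestrict = Ideal.span {minpoly K x} := by
    rw [AlgHom.ker_rangeRestrict]
    exact minpoly.ker_aeval_eq_span_minpoly K x
  rw [hspan, Subalgebra.finrank_toSubmodule,
    ← (Ideal.quotientKerAlgEquivOfSurjective
      (aeval x).rangeRestrict_surjective).toLinearEquiv.finrank_eq,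
    (Ideal.quotientEquivAlgOfEq K hker).toLinearEquiv.finrank_eq]
  exact finrank_quotient_span_eq_natDegree

theorem minpoly_separable_of_pow_eq_one {K A : Type*} [Field K] [CharZero K] [Ring A]
    [Algebra K A] {x : A} {d : ℕ} (hd : d ≠ 0) (hx : x ^ d = 1) : (minpoly K x).Separable :=
  (separable_X_pow_sub_C (1 : K) (Nat.cast_ne_zero.2 hd) one_ne_zero).of_dvd
    (minpoly.dvd K x (by simp [hx]))

theorem aeval_minpoly_eq_zero_of_hasEigenvalue_map {K L n : Type*} [Field K] [Field L]
    [Algebra K L] [Fintype n] [DecidableEq n] (M : Matrix n n K) {x : L}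
    (hx : Module.End.HasEigenvalue (toLin' (M.map (algebraMap K L))) x) :
    aeval x (minpoly K M) = 0 := by
  have hroot := Module.End.isRoot_of_hasEigenvalue hx
  rw [minpoly_toLin'] at hroot
  have hdvd : minpoly L (M.map (algebraMap K L)) ∣ (minpoly K M).map (algebraMap K L) := by
    refine minpoly.dvd _ _ ?_
    have := aeval_algHom_apply (Algebra.ofId K L).mapMatrix M (minpoly K M)
    rw [minpoly.aeval, map_zero, AlgHom.mapMatrix_apply] at this
    rw [aeval_map_algebraMap]
    exact this
  rw [← eval_map_algebraMap]
  exact eval_eq_zero_of_dvd_of_eval_eq_zero hdvd hroot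

namespace Equiv.Perm

variable {α : Type*} [Fintype α] [DecidableEq α] (g : Perm α)

theorem permMatrix_pow (R : Type*) [Semiring R] (k : ℕ) :
    (g ^ k).permMatrix R = g.permMatrix R ^ k := by
  simpa using map_pow (permMatrixHom (n := α) (R := R)) g⁻¹ k

theorem pow_apply_eq_self_iff_orderOf_cycleOf_dvd {a : α} {k : ℕ} :
    (g ^ k) a = a ↔ orderOf (g.cycleOf a) ∣ k := by
  rw [← cycleOf_pow_apply_self, orderOf_dvd_iff_pow_eq_one]
  by_cases ha : g a = a
  · simp [(cycleOf_eq_one_iff g).2 ha]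
  · exact ((isCycle_cycleOf g ha).pow_eq_one_iff' (by rwa [cycleOf_apply_self])).symm

theorem setOf_ne_one_pow_mem_cycleType_eq {M : Type*} [Monoid M] :
    {x : M | x ≠ 1 ∧ ∃ ℓ ∈ g.cycleType, x ^ ℓ = 1} =
      {x | ∃ a, x ^ orderOf (g.cycleOf a) = 1} \ {1} := by
  ext x
  simp only [Set.mem_ofPred_eq, Set.mem_sdiff, Set.mem_singleton_iff]
  constructor
  · rintro ⟨hx1, ℓ, hℓ, hx⟩
    rw [cycleType_def] at hℓ
    obtain ⟨c, hc, rfl⟩ := Multiset.mem_map.1 hℓ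
    have hcycle := (mem_cycleFactorsFinset_iff.1 hc).1
    obtain ⟨a, ha⟩ := hcycle.nonempty_support
    refine ⟨⟨a, ?_⟩, hx1⟩
    rwa [← cycle_is_cycleOf ha hc, hcycle.orderOf]
  · rintro ⟨⟨a, hx⟩, hx1⟩
    refine ⟨hx1, orderOf (g.cycleOf a), ?_, hx⟩
    by_cases ha : g a = a
    · rw [(cycleOf_eq_one_iff g).2 ha, orderOf_one, pow_one] at hx
      exact absurd hx hx1
    · rw [(isCycle_cycleOf g ha).orderOf, cycleType_def]
      exact Multiset.mem_map_of_mem _ (cycleOf_mem_cycleFactorsFinset_iff.2 (mem_support.2 ha))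

theorem aeval_permMatrix_prod_eq_zero (R : Type*) [CommRing R] :
    aeval (g.permMatrix R) (∏ a, (X ^ orderOf (g.cycleOf a) - 1 : R[X])) = 0 := by
  -- the factor indexed by `b` already kills the basis vector `e_b`
  refine ext_of_mulVec_single fun b => ?_
  have hb : (g ^ orderOf (g.cycleOf b)) b = b :=
    (pow_apply_eq_self_iff_orderOf_cycleOf_dvd g).2 dvd_rfl
  rw [← prod_erase_mul _ _ (mem_univ b), map_mul, ← mulVec_mulVec, zero_mulVec]
  suffices h : aeval (g.permMatrix R) (X ^ orderOf (g.cycleOf b) - 1 : R[X]) *ᵥ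
      Pi.single b 1 = 0 by
    rw [h, mulVec_zero]
  rw [map_sub, map_pow, aeval_X, map_one, ← permMatrix_pow, sub_mulVec, permMatrix_mulVec,
    one_mulVec, sub_eq_zero]
  ext j
  simp only [Function.comp_apply, Pi.single_apply]
  congr 1
  exact propext ⟨fun h => (g ^ _).injective (h.trans hb.symm), by rintro rfl; exact hb⟩

theorem hasEigenvalue_toLin'_permMatrix {K : Type*} [Field K] {x : K} {a : α}
    (hx : x ^ orderOf (g.cycleOf a) = 1) :
    Module.End.HasEigenvalue (toLin' (g.permMatrix K)) x := by
  have ha : (g ^ orderOf (g.cycleOf a)) a = a :=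
    (pow_apply_eq_self_iff_orderOf_cycleOf_dvd g).2 dvd_rfl
  let F : ℕ → α → K := fun m => x ^ m • Pi.single ((g ^ m) a) 1
  have hF : F (orderOf (g.cycleOf a)) = F 0 := by simp [F, hx, ha]
  refine Module.End.hasEigenvalue_of_hasEigenvector
    (x := ∑ m ∈ range (orderOf (g.cycleOf a)), F m) ⟨?_, fun h0 => ?_⟩
  · rw [Module.End.mem_eigenspace_iff, toLin'_apply, permMatrix_mulVec]
    nth_rw 1 [← sum_range_add_one_eq_sum_range F hF]
    ext j
    simp [F, Finset.sum_apply, Finset.mul_sum, Pi.single_apply, pow_succ', mul_apply]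
  · have := congrFun h0 a
    rw [Finset.sum_apply, sum_eq_single 0] at this
    · simp only [F, pow_zero, one_smul, Pi.single_apply] at this
      simp at this
    · intro m hm hm0
      have : ¬ orderOf (g.cycleOf a) ∣ m :=
        Nat.not_dvd_of_pos_of_lt (Nat.pos_of_ne_zero hm0) (mem_range.1 hm)
      simp [F, ((pow_apply_eq_self_iff_orderOf_cycleOf_dvd g).not.2 this)]
    · exact fun h => absurd (mem_range.2 (orderOf_pos _)) h

variable {K L : Type*} [Field K] [Field L] [Algebra K L]

theorem aeval_minpoly_permMatrix_eq_zero_iff {x : L} :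
    aeval x (minpoly K (g.permMatrix K)) = 0 ↔ ∃ a, x ^ orderOf (g.cycleOf a) = 1 := by
  constructor
  · intro hx
    obtain ⟨q, hq⟩ := minpoly.dvd K _ (aeval_permMatrix_prod_eq_zero g K)
    have hprod : aeval x (∏ a, (X ^ orderOf (g.cycleOf a) - 1 : K[X])) = 0 := by
      rw [hq, map_mul, hx, zero_mul]
    simpa [prod_eq_zero_iff, sub_eq_zero] using hprod
  · rintro ⟨a, ha⟩
    apply aeval_minpoly_eq_zero_of_hasEigenvalue_map
    rw [permMatrix, PEquiv.map_toMatrix]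
    exact hasEigenvalue_toLin'_permMatrix g ha

theorem natDegree_minpoly_permMatrix [CharZero K] [IsAlgClosed L] :
    (minpoly K (g.permMatrix K)).natDegree =
      {x : L | ∃ a, x ^ orderOf (g.cycleOf a) = 1}.ncard := by
  have hsep : (minpoly K (g.permMatrix K)).Separable :=
    minpoly_separable_of_pow_eq_one (orderOf_pos g).ne'
      (by rw [← permMatrix_pow, pow_orderOf_eq_one, permMatrix_one])
  have hne : minpoly K (g.permMatrix K) ≠ 0 := minpoly.ne_zero (IsIntegral.of_finite K _)
  rw [← card_rootSet_eq_natDegree (K := L) hsep (IsAlgClosed.splits _),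
    ← Nat.card_eq_fintype_card, ← Nat.card_coe_set_eq]
  congr! 2
  ext x
  rw [mem_rootSet_of_ne hne, aeval_minpoly_permMatrix_eq_zero_iff]
  rfl

end Equiv.Perm

theorem vectorSpan_permPolytope_zpowers {n : ℕ} (g : Equiv.Perm (Fin n)) :
    vectorSpan ℝ (permPolytope n (Subgroup.zpowers g)) =
      vectorSpan ℝ (Set.range (g.permMatrix ℝ ^ · : ℕ → Matrix (Fin n) (Fin n) ℝ)) := by
  rw [permPolytope, ← direction_affineSpan, affineSpan_convexHull, direction_affineSpan]
  congr 1
  ext M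
  simp only [Set.mem_ofPred_eq, Set.mem_range, ← Equiv.Perm.permMatrix_pow]
  constructor
  · rintro ⟨σ, hσ, rfl⟩
    obtain ⟨k, rfl⟩ := mem_powers_iff_mem_zpowers.2 hσ
    exact ⟨k, rfl⟩
  · rintro ⟨k, rfl⟩
    exact ⟨g ^ k, Subgroup.pow_mem _ (Subgroup.mem_zpowers g) k, rfl⟩

theorem dim_permPolytope_eq_ncard_roots_of_unity_general
    (n t : ℕ) (ℓ : Fin t → ℕ)
    (g : Equiv.Perm (Fin n))
    (hg : g.cycleType = Multiset.map ℓ Finset.univ.val) :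
    Module.finrank ℝ (vectorSpan ℝ (permPolytope n (Subgroup.zpowers g)))
      = Set.ncard {x : ℂ | x ≠ 1 ∧ ∃ i : Fin t, x ^ (ℓ i) = 1} := by
  have hset : {x : ℂ | x ≠ 1 ∧ ∃ i : Fin t, x ^ (ℓ i) = 1} =
      {x : ℂ | x ≠ 1 ∧ ∃ l ∈ g.cycleType, x ^ l = 1} := by
    simp [hg]
  rw [hset, g.setOf_ne_one_pow_mem_cycleType_eq, vectorSpan_permPolytope_zpowers]
  rcases isEmpty_or_nonempty (Fin n) with _ | ⟨⟨i₀⟩⟩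
  · simp [finrank_zero_of_subsingleton]
  have hrowSum : ∀ M ∈ Set.range (g.permMatrix ℝ ^ · : ℕ → Matrix (Fin n) (Fin n) ℝ),
      (∑ j, entryLinearMap ℝ ℝ i₀ j) M = 1 := by
    rintro _ ⟨k, rfl⟩
    simp [← Equiv.Perm.permMatrix_pow, Equiv.Perm.permMatrix, PEquiv.toMatrix_apply]
  have hdim := finrank_vectorSpan_add_one _ hrowSum (Set.range_nonempty _)
  rw [finrank_span_range_pow, g.natDegree_minpoly_permMatrix (L := ℂ)] at hdim
  have h1 : (1 : ℂ) ∈ {x : ℂ | ∃ a, x ^ orderOf (g.cycleOf a) = 1} := ⟨i₀, one_pow _⟩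
  rw [Set.ncard_sdiff_singleton_of_mem h1]
  omega

/-- The dimension of `P(⟨g⟩)` equals the number of complex numbers `x ≠ 1` which are
`ℓ i`-th roots of unity for some cycle length `ℓ i` of `g`. -/
theorem dim_permPolytope_eq_ncard_roots_of_unity
    (n t : ℕ) (ℓ : Fin t → ℕ) (hℓ : ∀ i, 2 ≤ ℓ i)
    (g : Equiv.Perm (Fin n))
    (hg : g.cycleType = Multiset.map ℓ Finset.univ.val) :
    Module.finrank ℝ (vectorSpan ℝ (permPolytope n (Subgroup.zpowers g)))
      = Set.ncard {x : ℂ | x ≠ 1 ∧ ∃ i : Fin t, x ^ (ℓ i) = 1} :=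
  dim_permPolytope_eq_ncard_roots_of_unity_general n t ℓ g hg
end

section
/- Let g ∈ Equiv.Perm (Fin n) have disjoint cycle decomposition into t cycles of lengths ℓ 1, …, ℓ t, let G = ⟨g⟩ and d = orderOf g. Then max(ℓ i − 1 : i ∈ {1, …, t}) ≤ dim P(G) ≤ d − 1 (where the maximum over the empty index set is 0). -/
open Equiv Finset Module

theorem vectorSpan_convexHull {𝕜 E : Type*} [Field 𝕜] [LinearOrder 𝕜] [IsStrictOrderedRing 𝕜]
    [AddCommGroup E] [Module 𝕜 E] (s : Set E) :
    vectorSpan 𝕜 (convexHull 𝕜 s) = vectorSpan 𝕜 s := by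
  rw [← direction_affineSpan, affineSpan_convexHull, direction_affineSpan]

theorem Equiv.Perm.permMatrix_row_eq_single {m R : Type*} [DecidableEq m] [Zero R] [One R]
    (σ : Perm m) (x : m) : σ.permMatrix R x = Pi.single (σ x) 1 := by
  ext y
  simp [Perm.permMatrix, PEquiv.toMatrix_apply, Pi.single_apply, eq_comm]

section

variable {n : ℕ} (G : Subgroup (Perm (Fin n)))

theorem vectorSpan_permPolytope :
    vectorSpan ℝ (permPolytope n G) =
      vectorSpan ℝ (Set.range fun σ : G => (σ : Perm (Fin n)).permMatrix ℝ) := by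
  rw [permPolytope, vectorSpan_convexHull]
  congr 1
  ext M
  simp [eq_comm]

theorem finrank_vectorSpan_permPolytope_le :
    finrank ℝ (vectorSpan ℝ (permPolytope n G)) ≤ Nat.card G - 1 := by
  classical
  rw [vectorSpan_permPolytope]
  refine finrank_vectorSpan_range_le ℝ _ ?_
  have := Nat.card_pos (α := G)
  rw [Fintype.card_eq_nat_card]
  omega

theorem card_sub_one_le_finrank_vectorSpan_permPolytope (x : Fin n) (s : Finset (Fin n))
    (hs : ∀ y ∈ s, ∃ σ ∈ G, σ x = y) :
    #s - 1 ≤ finrank ℝ (vectorSpan ℝ (permPolytope n G)) := by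
  classical
  let row : Matrix (Fin n) (Fin n) ℝ →ₗ[ℝ] Fin n → ℝ := LinearMap.proj x
  have hbasis : AffineIndependent ℝ (Pi.basisFun ℝ (Fin n)) :=
    (Pi.basisFun ℝ (Fin n)).linearIndependent.affineIndependent
  have himage : (s.image (Pi.basisFun ℝ (Fin n)) : Set (Fin n → ℝ)) ⊆
      row '' Set.range fun σ : G => (σ : Perm (Fin n)).permMatrix ℝ := by
    intro v hv
    obtain ⟨y, hy, rfl⟩ := Finset.mem_image.1 hv
    obtain ⟨σ, hσ, rfl⟩ := hs y hy
    exact ⟨_, ⟨⟨σ, hσ⟩, rfl⟩,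
      (Perm.permMatrix_row_eq_single σ x).trans (Pi.basisFun_apply ℝ _ _).symm⟩
  rcases Nat.eq_zero_or_eq_succ_pred #s with hs0 | hsucc
  · simp [hs0]
  calc #s - 1 = finrank ℝ (vectorSpan ℝ (s.image (Pi.basisFun ℝ (Fin n)) : Set (Fin n → ℝ))) :=
        (hbasis.finrank_vectorSpan_image_finset hsucc).symm
    _ ≤ finrank ℝ (vectorSpan ℝ (row '' Set.range fun σ : G => (σ : Perm (Fin n)).permMatrix ℝ)) :=
        Submodule.finrank_mono (vectorSpan_mono ℝ himage)
    _ = finrank ℝ ((vectorSpan ℝ (permPolytope n G)).map row) := by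
        rw [vectorSpan_permPolytope, ← row.coe_toAffineMap, ← AffineMap.map_vectorSpan,
          LinearMap.toAffineMap_linear]
    _ ≤ finrank ℝ (vectorSpan ℝ (permPolytope n G)) := Submodule.finrank_map_le _ _

end

theorem card_support_sub_one_le_finrank_vectorSpan_permPolytope {n : ℕ} {g c : Perm (Fin n)}
    (hc : c ∈ g.cycleFactorsFinset) :
    #c.support - 1 ≤ finrank ℝ (vectorSpan ℝ (permPolytope n (Subgroup.zpowers g))) := by
  obtain ⟨x, hx⟩ := (Perm.mem_cycleFactorsFinset_iff.1 hc).1.nonempty_support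
  refine card_sub_one_le_finrank_vectorSpan_permPolytope _ x _ fun y hy => ?_
  rw [Perm.cycle_is_cycleOf hx hc, Perm.mem_support_cycleOf_iff] at hy
  obtain ⟨i, rfl⟩ := hy.1
  exact ⟨g ^ i, Subgroup.zpow_mem_zpowers g i, rfl⟩

theorem dim_permPolytope_bounds_general
    (n t : ℕ) (ℓ : Fin t → ℕ)
    (g : Equiv.Perm (Fin n))
    (hg : g.cycleType = Multiset.map ℓ Finset.univ.val) :
    Finset.univ.sup (fun i : Fin t => ℓ i - 1)
        ≤ Module.finrank ℝ (vectorSpan ℝ (permPolytope n (Subgroup.zpowers g))) ∧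
      Module.finrank ℝ (vectorSpan ℝ (permPolytope n (Subgroup.zpowers g)))
        ≤ orderOf g - 1 := by
  refine ⟨Finset.sup_le fun i _ => ?_, ?_⟩
  · have hi : ℓ i ∈ g.cycleType := hg ▸ Multiset.mem_map_of_mem ℓ (Finset.mem_univ_val i)
    obtain ⟨c, hc, hcard⟩ := Multiset.mem_map.1 hi
    exact hcard ▸ card_support_sub_one_le_finrank_vectorSpan_permPolytope hc
  · exact Nat.card_zpowers g ▸ finrank_vectorSpan_permPolytope_le (Subgroup.zpowers g)

/-- `max (ℓ i - 1) ≤ dim P(⟨g⟩) ≤ d - 1` where `d = orderOf g` and the `ℓ i` are the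
cycle lengths of `g`. -/
theorem dim_permPolytope_bounds
    (n t : ℕ) (ℓ : Fin t → ℕ) (hℓ : ∀ i, 2 ≤ ℓ i)
    (g : Equiv.Perm (Fin n))
    (hg : g.cycleType = Multiset.map ℓ Finset.univ.val) :
    Finset.univ.sup (fun i : Fin t => ℓ i - 1)
        ≤ Module.finrank ℝ (vectorSpan ℝ (permPolytope n (Subgroup.zpowers g))) ∧
      Module.finrank ℝ (vectorSpan ℝ (permPolytope n (Subgroup.zpowers g)))
        ≤ orderOf g - 1 :=
  dim_permPolytope_bounds_general n t ℓ g hg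
end

section
/- Let g ∈ Equiv.Perm (Fin n) with g ≠ 1 have disjoint cycle decomposition into t cycles of lengths ℓ 1, …, ℓ t, let G = ⟨g⟩ and d = orderOf g. Then P(G) is a simplex — i.e. the family of points (M(g^k))_{k ∈ Fin d} is affinely independent over ℝ — if and only if ℓ i = d for some i ∈ {1, …, t}, i.e. g has a cycle of length d. -/
/-!
Write `d = orderOf g`. If some point `x` has an orbit of length `d`, the entries `(x, gᵏ x)`,
`k < d`, single out each matrix `M(gᵏ)`, so the matrices are even linearly independent.
Otherwise every orbit length `p` is a proper divisor of `d`. Take a primitive `d`-th root of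
unity `ζ`: each entry of `∑ₖ ζᵏ M(gᵏ)`, and also `∑ₖ ζᵏ`, is a sum over `k : Fin d` that gets
multiplied by `ζᵖ ≠ 1` when `k` is shifted by a period `p`, hence vanishes. Taking real
parts, the weights `Re ζᵏ` give an affine dependence whose weight at `k = 0` is `1`.
-/

open Finset

theorem pow_val_add_of_pow_eq_one {M : Type*} [Monoid M] {a : M} {d : ℕ} (ha : a ^ d = 1)
    (k s : Fin d) : a ^ ((k + s : Fin d) : ℕ) = a ^ ((k : ℕ) + s) := by
  rw [Fin.val_add, ← pow_eq_pow_mod _ ha]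

theorem sum_pow_mul_eq_zero_of_periodic {K : Type*} [CommRing K] [NoZeroDivisors K]
    {d : ℕ} [NeZero d] {ζ : K} (hζ : ζ ^ d = 1) {s : Fin d} (hs : ζ ^ (s : ℕ) ≠ 1)
    (f : Fin d → K) (hf : ∀ k, f (k + s) = f k) :
    ∑ k : Fin d, ζ ^ (k : ℕ) * f k = 0 := by
  set S := ∑ k : Fin d, ζ ^ (k : ℕ) * f k
  have hshift : S = ζ ^ (s : ℕ) * S := by
    calc S = ∑ k : Fin d, ζ ^ ((k + s : Fin d) : ℕ) * f (k + s) :=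
          (Equiv.sum_comp (Equiv.addRight s) _).symm
      _ = ζ ^ (s : ℕ) * S := by
          simp only [pow_val_add_of_pow_eq_one hζ, hf, pow_add, S, mul_sum]
          exact sum_congr rfl fun k _ => by ring
  have : (ζ ^ (s : ℕ) - 1) * S = 0 := by linear_combination -hshift
  exact (mul_eq_zero.1 this).resolve_left (sub_ne_zero.2 hs)

theorem sum_re_pow_mul_eq_zero_of_periodic {d : ℕ} [NeZero d] {ζ : ℂ} (hζ : ζ ^ d = 1)
    {s : Fin d} (hs : ζ ^ (s : ℕ) ≠ 1) (f : Fin d → ℝ) (hf : ∀ k, f (k + s) = f k) :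
    ∑ k : Fin d, (ζ ^ (k : ℕ)).re * f k = 0 := by
  have h := congrArg Complex.re
    (sum_pow_mul_eq_zero_of_periodic hζ hs (fun k => (f k : ℂ)) fun k => by rw [hf])
  simpa only [Complex.re_sum, Complex.re_mul_ofReal, Complex.zero_re] using h

namespace Equiv.Perm

theorem permMatrix_apply {α R : Type*} [DecidableEq α] [Zero R] [One R] (σ : Perm α)
    (i j : α) :
    σ.permMatrix R i j = if σ i = j then 1 else 0 := by
  simp [Equiv.Perm.permMatrix, PEquiv.toMatrix_apply, Equiv.toPEquiv_apply]

variable {α : Type*} [Fintype α] [DecidableEq α]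

theorem pow_add_orderOf_cycleOf_apply (g : Perm α) (x : α) (k : ℕ) :
    (g ^ (k + orderOf (g.cycleOf x))) x = (g ^ k) x := by
  rw [← cycleOf_pow_apply_self, pow_add, pow_orderOf_eq_one, mul_one, cycleOf_pow_apply_self]

theorem pow_apply_injOn_Iio_orderOf_cycleOf (g : Perm α) (x : α) :
    (Set.Iio (orderOf (g.cycleOf x))).InjOn (fun k : ℕ => (g ^ k) x) := by
  intro i hi j hj hij
  by_cases hx : g x = x
  · simp only [Set.mem_Iio, (cycleOf_eq_one_iff g).2 hx, orderOf_one] at hi hj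
    omega
  · have hc := g.isCycle_cycleOf hx
    refine pow_injOn_Iio_orderOf hi hj ((hc.pow_eq_pow_iff).2 ⟨x, ?_, ?_⟩)
    · rwa [cycleOf_apply_self]
    · simpa only [cycleOf_pow_apply_self] using hij

theorem mem_cycleType_iff_exists_orderOf_cycleOf {g : Perm α} {n : ℕ} (hn : n ≠ 1) :
    n ∈ g.cycleType ↔ ∃ x, orderOf (g.cycleOf x) = n := by
  constructor
  · rw [cycleType_def, Multiset.mem_map]
    rintro ⟨c, hc, rfl⟩
    have hcycle := (mem_cycleFactorsFinset_iff.1 hc).1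
    obtain ⟨x, hx⟩ := hcycle.nonempty_support
    exact ⟨x, by rw [← cycle_is_cycleOf hx hc, hcycle.orderOf]; rfl⟩
  · rintro ⟨x, rfl⟩
    have hx : g x ≠ x := fun hx => hn (by rw [(cycleOf_eq_one_iff g).2 hx, orderOf_one])
    rw [cycleType_def, Multiset.mem_map]
    exact ⟨g.cycleOf x, cycleOf_mem_cycleFactorsFinset_iff.2 (mem_support.2 hx),
      ((g.isCycle_cycleOf hx).orderOf).symm⟩

theorem linearIndependent_permMatrix_pow {R : Type*} [Semiring R] {g : Perm α} {x : α}
    (hx : orderOf (g.cycleOf x) = orderOf g) :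
    LinearIndependent R (fun k : Fin (orderOf g) => (g ^ (k : ℕ)).permMatrix R) := by
  rw [Fintype.linearIndependent_iffₛ]
  intro u v huv j
  have hinj (k : Fin (orderOf g)) : (g ^ (k : ℕ)) x = (g ^ (j : ℕ)) x ↔ k = j :=
    ⟨fun h => Fin.ext (g.pow_apply_injOn_Iio_orderOf_cycleOf x (by simp [hx]) (by simp [hx]) h),
      fun h => h ▸ rfl⟩
  simpa [Matrix.sum_apply, permMatrix_apply, hinj] using
    congrFun (congrFun huv x) ((g ^ (j : ℕ)) x)

theorem not_affineIndependent_permMatrix_pow {g : Perm α} (hg : g ≠ 1)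
    (h : ∀ x, orderOf (g.cycleOf x) ≠ orderOf g) :
    ¬ AffineIndependent ℝ (fun k : Fin (orderOf g) => (g ^ (k : ℕ)).permMatrix ℝ) := by
  set d := orderOf g
  have hd : 1 < d := lt_of_le_of_ne (orderOf_pos g) (Ne.symm (mt orderOf_eq_one_iff.1 hg))
  have : NeZero d := ⟨by omega⟩
  obtain ⟨ζ, hζ⟩ : ∃ ζ : ℂ, IsPrimitiveRoot ζ d :=
    ⟨_, Complex.isPrimitiveRoot_exp d (by omega)⟩
  have hperiod (x : α) : orderOf (g.cycleOf x) < d :=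
    lt_of_le_of_ne (Nat.le_of_dvd (orderOf_pos g) (orderOf_cycleOf_dvd_orderOf g x)) (h x)
  rw [affineIndependent_iff]
  intro hAI
  have hsum : ∑ k : Fin d, (ζ ^ (k : ℕ)).re = 0 := by
    simpa using sum_re_pow_mul_eq_zero_of_periodic hζ.pow_eq_one (s := ⟨1, hd⟩)
      (hζ.pow_ne_one_of_pos_of_lt one_ne_zero hd) 1 fun _ => rfl
  have hcomb : ∑ k : Fin d, (ζ ^ (k : ℕ)).re • (g ^ (k : ℕ)).permMatrix ℝ = 0 := by
    ext x y
    simp only [Matrix.sum_apply, Matrix.smul_apply, smul_eq_mul, Matrix.zero_apply]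
    refine sum_re_pow_mul_eq_zero_of_periodic hζ.pow_eq_one (s := ⟨_, hperiod x⟩)
      (hζ.pow_ne_one_of_pos_of_lt (orderOf_pos _).ne' (hperiod x)) _ fun k => ?_
    simp only [permMatrix_apply, pow_val_add_of_pow_eq_one (pow_orderOf_eq_one g),
      pow_add_orderOf_cycleOf_apply]
  simpa using hAI univ _ hsum hcomb ⟨0, by omega⟩ (mem_univ _)

theorem affineIndependent_permMatrix_pow_iff {g : Perm α} (hg : g ≠ 1) :
    AffineIndependent ℝ (fun k : Fin (orderOf g) => (g ^ (k : ℕ)).permMatrix ℝ) ↔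
      orderOf g ∈ g.cycleType := by
  rw [mem_cycleType_iff_exists_orderOf_cycleOf (mt orderOf_eq_one_iff.1 hg)]
  refine ⟨fun hAI => ?_, fun ⟨x, hx⟩ =>
    (linearIndependent_permMatrix_pow (R := ℝ) hx).affineIndependent⟩
  by_contra! h
  exact not_affineIndependent_permMatrix_pow hg h hAI

end Equiv.Perm

theorem permPolytope_simplex_iff_general
    (n t : ℕ) (ℓ : Fin t → ℕ)
    (g : Equiv.Perm (Fin n)) (hg1 : g ≠ 1)
    (hg : g.cycleType = Multiset.map ℓ Finset.univ.val) :
    AffineIndependent ℝ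
        (fun k : Fin (orderOf g) => (g ^ (k : ℕ)).permMatrix ℝ)
      ↔ ∃ i : Fin t, ℓ i = orderOf g := by
  rw [Equiv.Perm.affineIndependent_permMatrix_pow_iff hg1, hg, Multiset.mem_map]
  simp

/-- `P(⟨g⟩)` is a simplex (the permutation matrices `M(g^k)`, `k < d = orderOf g`, are
affinely independent) if and only if `g` has a cycle of length `d`. -/
theorem permPolytope_simplex_iff
    (n t : ℕ) (ℓ : Fin t → ℕ) (hℓ : ∀ i, 2 ≤ ℓ i)
    (g : Equiv.Perm (Fin n)) (hg1 : g ≠ 1)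
    (hg : g.cycleType = Multiset.map ℓ Finset.univ.val) :
    AffineIndependent ℝ
        (fun k : Fin (orderOf g) => (g ^ (k : ℕ)).permMatrix ℝ)
      ↔ ∃ i : Fin t, ℓ i = orderOf g :=
  permPolytope_simplex_iff_general n t ℓ g hg1 hg
end

section
/- Let g ∈ Equiv.Perm (Fin n) have disjoint cycle decomposition into t cycles of lengths ℓ 1, …, ℓ t, let G = ⟨g⟩ and d = orderOf g, and suppose ℓ i = d for some i. Then P(G) is a unimodular simplex up to lattice isomorphism: there exist affine maps φ : Matrix (Fin n) (Fin n) ℝ →ᵃ[ℝ] (Fin d → ℝ) and ψ : (Fin d → ℝ) →ᵃ[ℝ] Matrix (Fin n) (Fin n) ℝ such that φ maps every matrix with all entries in ℤ to a vector with all entries in ℤ, ψ maps every vector with all entries in ℤ to a matrix with all entries in ℤ, and for every k ∈ Fin d one has φ (M(g^k)) = e k (the k-th standard basis vector of Fin d → ℝ) and ψ (e k) = M(g^k). -/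
/-!
Pick a point `x` on a cycle of `g` of length `d = orderOf g`. The points `g^k x` for `k < d` are
pairwise distinct, so the entry `(x, g^k x)` is `1` in `M(g^j)` exactly when `j = k`: reading off
these `d` entries sends `M(g^k)` to `e_k`. Conversely `e_k ↦ M(g^k)` extends linearly, and it is
integral because permutation matrices have entries in `{0, 1}`.
-/

open Finset Function

namespace Equiv.Perm

variable {α : Type*}

theorem IsCycleOn.pow_apply_injOn {f : Perm α} {s : Finset α} {a : α} (hf : f.IsCycleOn s)
    (ha : a ∈ s) : (Set.Iio #s).InjOn fun n : ℕ => (f ^ n) a :=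
  fun _ hm _ hn h => ((hf.pow_apply_eq_pow_apply ha).1 h).eq_of_lt_of_lt hm hn

variable [DecidableEq α] [Fintype α]

theorem exists_mem_support_cycleOf_card_eq {g : Perm α} {k : ℕ} (hk : k ∈ g.cycleType) :
    ∃ x, x ∈ (g.cycleOf x).support ∧ #(g.cycleOf x).support = k := by
  rw [cycleType_def, Multiset.mem_map] at hk
  obtain ⟨c, hc, rfl⟩ := hk
  obtain ⟨x, hx⟩ := (mem_cycleFactorsFinset_iff.1 hc).1.nonempty_support
  exact ⟨x, cycle_is_cycleOf hx hc ▸ ⟨hx, rfl⟩⟩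

theorem exists_pow_apply_injective_of_orderOf_mem_cycleType {g : Perm α}
    (h : orderOf g ∈ g.cycleType) :
    ∃ x, Injective fun k : Fin (orderOf g) => (g ^ (k : ℕ)) x := by
  obtain ⟨x, hx, hcard⟩ := exists_mem_support_cycleOf_card_eq h
  refine ⟨x, fun a b hab => Fin.ext ?_⟩
  exact (g.isCycleOn_support_cycleOf x).pow_apply_injOn hx (by simp [hcard]) (by simp [hcard]) hab

end Equiv.Perm

namespace Matrix

open Equiv

variable {ι α R : Type*} [DecidableEq α]

def orbitEntryLinearMap [Semiring R] (σ : ι → Perm α) (x : α) : Matrix α α R →ₗ[R] ι → R :=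
  LinearMap.pi fun k => entryLinearMap R R x (σ k x)

theorem orbitEntryLinearMap_permMatrix [DecidableEq ι] [Semiring R] {σ : ι → Perm α} {x : α}
    (hσ : Injective fun k => σ k x) (k : ι) :
    orbitEntryLinearMap σ x ((σ k).permMatrix R) = Pi.single k 1 := by
  ext j
  simp [orbitEntryLinearMap, Pi.single_apply, hσ.eq_iff, eq_comm]

theorem linearCombination_permMatrix_intCast [Fintype ι] [Ring R] (σ : ι → Perm α) (z : ι → ℤ) :
    Fintype.linearCombination R (fun k => (σ k).permMatrix R) (fun k => (z k : R)) =
      (Fintype.linearCombination ℤ (fun k => (σ k).permMatrix ℤ) z).map Int.cast := by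
  ext p q
  simp [Fintype.linearCombination_apply, Matrix.sum_apply]

end Matrix

theorem permPolytope_unimodular_simplex_general
    (n t : ℕ) (ℓ : Fin t → ℕ)
    (g : Equiv.Perm (Fin n))
    (hg : g.cycleType = Multiset.map ℓ Finset.univ.val)
    (hcycle : ∃ i : Fin t, ℓ i = orderOf g) :
    ∃ (φ : Matrix (Fin n) (Fin n) ℝ →ᵃ[ℝ] (Fin (orderOf g) → ℝ))
      (ψ : (Fin (orderOf g) → ℝ) →ᵃ[ℝ] Matrix (Fin n) (Fin n) ℝ),
      (∀ A : Matrix (Fin n) (Fin n) ℝ,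
        (∀ p q : Fin n, ∃ z : ℤ, A p q = (z : ℝ)) →
        ∀ k : Fin (orderOf g), ∃ z : ℤ, φ A k = (z : ℝ)) ∧
      (∀ v : Fin (orderOf g) → ℝ,
        (∀ k : Fin (orderOf g), ∃ z : ℤ, v k = (z : ℝ)) →
        ∀ p q : Fin n, ∃ z : ℤ, ψ v p q = (z : ℝ)) ∧
      (∀ k : Fin (orderOf g),
        φ ((g ^ (k : ℕ)).permMatrix ℝ) = Pi.single k (1 : ℝ)) ∧
      (∀ k : Fin (orderOf g),
        ψ (Pi.single k (1 : ℝ)) = (g ^ (k : ℕ)).permMatrix ℝ) := by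
  have hmem : orderOf g ∈ g.cycleType := by
    obtain ⟨i, hi⟩ := hcycle
    rw [hg, ← hi]
    exact Multiset.mem_map_of_mem ℓ (Finset.mem_univ_val i)
  obtain ⟨x, hx⟩ := Equiv.Perm.exists_pow_apply_injective_of_orderOf_mem_cycleType hmem
  let σ : Fin (orderOf g) → Equiv.Perm (Fin n) := fun k => g ^ (k : ℕ)
  refine ⟨(Matrix.orbitEntryLinearMap (R := ℝ) σ x).toAffineMap,
    (Fintype.linearCombination ℝ fun k => (σ k).permMatrix ℝ).toAffineMap,
    fun A hA k => hA x (σ k x), fun v hv p q => ?_, Matrix.orbitEntryLinearMap_permMatrix hx,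
    fun k => by simp [σ]⟩
  choose z hz using hv
  rw [show v = fun k => (z k : ℝ) from funext hz]
  simp only [LinearMap.coe_toAffineMap, Matrix.linearCombination_permMatrix_intCast,
    Matrix.map_apply]
  exact ⟨_, rfl⟩

/-- If `g` has a cycle of length `d = orderOf g`, then `P(⟨g⟩)` is a unimodular simplex up to
lattice isomorphism: there are mutually inverse integral affine maps carrying the vertices
`M(g^k)` to the standard basis vectors of `Fin d → ℝ` and back. -/
theorem permPolytope_unimodular_simplex
    (n t : ℕ) (ℓ : Fin t → ℕ) (hℓ : ∀ i, 2 ≤ ℓ i)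
    (g : Equiv.Perm (Fin n))
    (hg : g.cycleType = Multiset.map ℓ Finset.univ.val)
    (hcycle : ∃ i : Fin t, ℓ i = orderOf g) :
    ∃ (φ : Matrix (Fin n) (Fin n) ℝ →ᵃ[ℝ] (Fin (orderOf g) → ℝ))
      (ψ : (Fin (orderOf g) → ℝ) →ᵃ[ℝ] Matrix (Fin n) (Fin n) ℝ),
      (∀ A : Matrix (Fin n) (Fin n) ℝ,
        (∀ p q : Fin n, ∃ z : ℤ, A p q = (z : ℝ)) →
        ∀ k : Fin (orderOf g), ∃ z : ℤ, φ A k = (z : ℝ)) ∧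
      (∀ v : Fin (orderOf g) → ℝ,
        (∀ k : Fin (orderOf g), ∃ z : ℤ, v k = (z : ℝ)) →
        ∀ p q : Fin n, ∃ z : ℤ, ψ v p q = (z : ℝ)) ∧
      (∀ k : Fin (orderOf g),
        φ ((g ^ (k : ℕ)).permMatrix ℝ) = Pi.single k (1 : ℝ)) ∧
      (∀ k : Fin (orderOf g),
        ψ (Pi.single k (1 : ℝ)) = (g ^ (k : ℕ)).permMatrix ℝ) :=
  permPolytope_unimodular_simplex_general n t ℓ g hg hcycle
end

section
/- Let g ∈ Equiv.Perm (Fin n) with g ≠ 1, let G = ⟨g⟩ and d = orderOf g. If d is a prime power (d = p^e for some prime p and e ≥ 1), then P(G) is a simplex, i.e. the family of points (M(g^k))_{k ∈ Fin d} is affinely independent over ℝ. -/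
/-!
If `orderOf g = p ^ (k + 1)` then `g ^ p ^ k ≠ 1` moves some point `x`, and the orbit of `x` has
length exactly `p ^ (k + 1)`. The matrices `M(g ^ i)`, `i < orderOf g`, then have their `x`-th rows
equal to distinct standard basis vectors, so they are linearly, hence affinely, independent.
-/

open Function

namespace Equiv.Perm

theorem exists_minimalPeriod_eq_orderOf_of_isPrimePow {α : Type*} {g : Perm α}
    (h : IsPrimePow (orderOf g)) : ∃ x, minimalPeriod g x = orderOf g := by
  obtain ⟨p, k, hp, hk, hpk⟩ := (isPrimePow_nat_iff _).mp h
  obtain ⟨k, rfl⟩ := Nat.exists_eq_succ_of_ne_zero hk.ne'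
  have : Fact p.Prime := ⟨hp⟩
  obtain ⟨x, hx⟩ : ∃ x, (g ^ p ^ k) x ≠ x := by
    by_contra! hfix
    exact pow_ne_one_of_lt_orderOf (pow_ne_zero _ hp.ne_zero)
      (hpk ▸ Nat.pow_lt_pow_succ hp.one_lt) (Equiv.ext hfix)
  refine ⟨x, hpk ▸ minimalPeriod_eq_prime_pow ?_ ?_⟩
  · simpa [IsPeriodicPt, IsFixedPt, iterate_eq_pow] using hx
  · simp [IsPeriodicPt, IsFixedPt, iterate_eq_pow, hpk, pow_orderOf_eq_one]

theorem permMatrix_apply_row {α R : Type*} [DecidableEq α] [Zero R] [One R]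
    (σ : Perm α) (x : α) : σ.permMatrix R x = Pi.single (σ x) 1 := by
  ext y
  simp [PEquiv.toMatrix_apply, Pi.single_apply, eq_comm]

theorem linearIndependent_permMatrix_of_injective_apply {ι α R : Type*} [DecidableEq α]
    [Semiring R] {σ : ι → Perm α} (x : α) (hσ : Injective fun i => σ i x) :
    LinearIndependent R fun i => (σ i).permMatrix R := by
  refine LinearIndependent.of_comp (LinearMap.proj (R := R) (φ := fun _ : α => α → R) x) ?_
  convert (Pi.linearIndependent_single_one α R).comp _ hσ using 1
  funext i
  exact permMatrix_apply_row (σ i) x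

end Equiv.Perm

theorem permPolytope_simplex_of_primePow_general
    (n : ℕ) (g : Equiv.Perm (Fin n))
    (hpp : ∃ (p e : ℕ), p.Prime ∧ 1 ≤ e ∧ orderOf g = p ^ e) :
    AffineIndependent ℝ
      (fun k : Fin (orderOf g) => (g ^ (k : ℕ)).permMatrix ℝ) := by
  obtain ⟨p, e, hp, he, hpe⟩ := hpp
  obtain ⟨x, hx⟩ := g.exists_minimalPeriod_eq_orderOf_of_isPrimePow
    ((isPrimePow_nat_iff _).mpr ⟨p, e, hp, he, hpe.symm⟩)
  have horbit : Injective fun k : Fin (orderOf g) => (g ^ (k : ℕ)) x := by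
    intro i j hij
    refine Fin.ext (iterate_injOn_Iio_minimalPeriod (f := g) (x := x)
      (by simp [hx]) (by simp [hx]) ?_)
    simpa only [Equiv.Perm.iterate_eq_pow] using hij
  exact (Equiv.Perm.linearIndependent_permMatrix_of_injective_apply (R := ℝ) x
    horbit).affineIndependent

/-- If the order of `g ≠ 1` is a prime power, then `P(⟨g⟩)` is a simplex, i.e. the
permutation matrices `M(g^k)`, `k < orderOf g`, are affinely independent over `ℝ`. -/
theorem permPolytope_simplex_of_primePow
    (n : ℕ) (g : Equiv.Perm (Fin n)) (hg1 : g ≠ 1)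
    (hpp : ∃ (p e : ℕ), p.Prime ∧ 1 ≤ e ∧ orderOf g = p ^ e) :
    AffineIndependent ℝ
      (fun k : Fin (orderOf g) => (g ^ (k : ℕ)).permMatrix ℝ) :=
  permPolytope_simplex_of_primePow_general n g hpp
end

section
/- Let g ∈ Equiv.Perm (Fin n) have disjoint cycle decomposition into t cycles of lengths ℓ 1, …, ℓ t, let G = ⟨g⟩ and d = orderOf g, and let k ∈ ℕ with k < d. Then g^k is decomposable in G if and only if there exists a subset I with ∅ ≠ I ⊊ {1, …, t} such that (1) gcd(d_I, d_{I^c}) divides k, and (2) neither d_I divides k nor d_{I^c} divides k. -/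
/-!
A point `x` is fixed by `g ^ m` iff the length of its cycle divides `m`. In `⟨g⟩` the only
factorisations of `g ^ k` are `g ^ m * g ^ (k - m)`, and the factors are disjoint iff every cycle
length divides `m` or `k - m`. Calling `I` the set of cycles whose length does not divide `m`, this
says `d_I ∣ k - m` and `d_{Iᶜ} ∣ m`, which is solvable in `m` iff `gcd(d_I, d_{Iᶜ}) ∣ k` (Bézout);
the two factors are nontrivial iff `d_I ∤ k` and `d_{Iᶜ} ∤ k`.
-/

/-- `h` is a subelement of `z` if `z = h * k` for some permutation `k` disjoint from `h`. -/
def IsSubelement {n : ℕ} (h z : Equiv.Perm (Fin n)) : Prop :=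
  ∃ k : Equiv.Perm (Fin n), h.Disjoint k ∧ z = h * k

/-- `z` is decomposable in `G` if some subelement `h ∈ G` of `z` satisfies `h ≠ 1` and
`h ≠ z`. -/
def DecomposableIn {n : ℕ} (G : Subgroup (Equiv.Perm (Fin n)))
    (z : Equiv.Perm (Fin n)) : Prop :=
  ∃ h ∈ G, IsSubelement h z ∧ h ≠ 1 ∧ h ≠ z

open Finset

namespace Equiv.Perm

variable {α : Type*} [Fintype α] [DecidableEq α] (g : Perm α)

theorem forall_mem_cycleType_iff (P : ℕ → Prop) :
    (∀ c ∈ g.cycleType, P c) ↔ ∀ x, g x ≠ x → P #(g.cycleOf x).support := by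
  rw [cycleType_def, Multiset.forall_mem_map_iff]
  constructor
  · intro h x hx
    exact h _ (cycleOf_mem_cycleFactorsFinset_iff.2 (mem_support.2 hx))
  · intro h σ hσ
    obtain ⟨x, hx⟩ := (mem_cycleFactorsFinset_iff.1 hσ).1.nonempty_support
    rw [cycle_is_cycleOf hx hσ]
    exact h x (mem_support.1 (mem_cycleFactorsFinset_support_le hσ hx))

theorem zpow_apply_eq_self_iff {x : α} (hx : g x ≠ x) (m : ℤ) :
    (g ^ m) x = x ↔ (#(g.cycleOf x).support : ℤ) ∣ m := by
  rw [Int.dvd_iff_emod_eq_zero, ← Int.zero_emod, ← g.zpow_eq_zpow_on_iff hx, zpow_zero, one_apply]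

theorem zpow_eq_one_iff_forall_mem_cycleType (m : ℤ) :
    g ^ m = 1 ↔ ∀ c ∈ g.cycleType, (c : ℤ) ∣ m := by
  rw [forall_mem_cycleType_iff, Perm.ext_iff]
  refine forall_congr' fun x => ?_
  by_cases hx : g x = x
  · simp [zpow_apply_eq_self_of_apply_eq_self hx, hx]
  · simp [zpow_apply_eq_self_iff g hx, hx]

theorem disjoint_zpow_zpow_iff (a b : ℤ) :
    (g ^ a).Disjoint (g ^ b) ↔ ∀ c ∈ g.cycleType, (c : ℤ) ∣ a ∨ (c : ℤ) ∣ b := by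
  rw [forall_mem_cycleType_iff]
  refine forall_congr' fun x => ?_
  by_cases hx : g x = x
  · simp [zpow_apply_eq_self_of_apply_eq_self hx, hx]
  · simp [zpow_apply_eq_self_iff g hx, hx]

end Equiv.Perm

open Equiv

theorem decomposableIn_zpowers_iff {n : ℕ} (g : Perm (Fin n)) (k : ℤ) :
    DecomposableIn (Subgroup.zpowers g) (g ^ k) ↔
      ∃ m : ℤ, (g ^ m).Disjoint (g ^ (k - m)) ∧ g ^ m ≠ 1 ∧ g ^ (k - m) ≠ 1 := by
  have hsplit (m : ℤ) : g ^ k = g ^ m * g ^ (k - m) := by rw [← zpow_add, add_sub_cancel]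
  constructor
  · rintro ⟨_, ⟨m, rfl⟩, ⟨r, hdisj, hk⟩, hne_one, hne⟩
    obtain rfl : r = g ^ (k - m) := mul_left_cancel (hk.symm.trans (hsplit m))
    exact ⟨m, hdisj, hne_one, fun h => hne (by rw [hk, h, mul_one])⟩
  · rintro ⟨m, hdisj, hne_one, hne_one'⟩
    exact ⟨g ^ m, ⟨m, rfl⟩, ⟨_, hdisj, hsplit m⟩, hne_one,
      fun h => hne_one' (left_eq_mul.1 (h.trans (hsplit m)))⟩

theorem Int.exists_dvd_sub_and_dvd_iff_gcd_dvd (a b k : ℕ) :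
    (∃ m : ℤ, (a : ℤ) ∣ k - m ∧ (b : ℤ) ∣ m) ↔ Nat.gcd a b ∣ k := by
  rw [← Int.gcd_natCast_natCast, Int.gcd_dvd_iff]
  constructor
  · rintro ⟨m, ⟨x, hx⟩, ⟨y, rfl⟩⟩
    exact ⟨x, y, by rw [← hx, sub_add_cancel]⟩
  · rintro ⟨x, y, h⟩
    exact ⟨b * y, ⟨x, by rw [h, add_sub_cancel_right]⟩, dvd_mul_right _ _⟩

namespace Finset

theorem natCast_lcm_dvd_iff {ι : Type*} (ℓ : ι → ℕ) (s : Finset ι) (m : ℤ) :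
    ((s.lcm ℓ : ℕ) : ℤ) ∣ m ↔ ∀ i ∈ s, (ℓ i : ℤ) ∣ m := by
  simp only [Int.natCast_dvd, Finset.lcm_dvd_iff]

variable {ι : Type*} [Fintype ι] [DecidableEq ι] (ℓ : ι → ℕ)

theorem forall_dvd_iff_lcm_dvd_and_lcm_compl_dvd (I : Finset ι) (m : ℤ) :
    (∀ i, (ℓ i : ℤ) ∣ m) ↔ ((I.lcm ℓ : ℕ) : ℤ) ∣ m ∧ ((Iᶜ.lcm ℓ : ℕ) : ℤ) ∣ m := by
  rw [natCast_lcm_dvd_iff, natCast_lcm_dvd_iff]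
  exact ⟨fun h => ⟨fun i _ => h i, fun i _ => h i⟩,
    fun h i => if hi : i ∈ I then h.1 i hi else h.2 i (mem_compl.2 hi)⟩

theorem exists_split_iff_exists_finset (k : ℕ) :
    (∃ m : ℤ, (∀ i, (ℓ i : ℤ) ∣ m ∨ (ℓ i : ℤ) ∣ k - m) ∧
        ¬ (∀ i, (ℓ i : ℤ) ∣ m) ∧ ¬ (∀ i, (ℓ i : ℤ) ∣ k - m)) ↔
      ∃ I : Finset ι, I ≠ ∅ ∧ I ≠ univ ∧ Nat.gcd (I.lcm ℓ) (Iᶜ.lcm ℓ) ∣ k ∧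
        ¬ (I.lcm ℓ ∣ k) ∧ ¬ (Iᶜ.lcm ℓ ∣ k) := by
  constructor
  · rintro ⟨m, hsplit, hm, hkm⟩
    set I := univ.filter fun i => ¬ (ℓ i : ℤ) ∣ m
    have hI : ((I.lcm ℓ : ℕ) : ℤ) ∣ k - m :=
      (natCast_lcm_dvd_iff ℓ I _).2 fun i hi => (hsplit i).resolve_left (by simpa [I] using hi)
    have hIc : ((Iᶜ.lcm ℓ : ℕ) : ℤ) ∣ m :=
      (natCast_lcm_dvd_iff ℓ Iᶜ _).2 fun i hi => by simpa [I] using hi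
    have hIk : ¬ I.lcm ℓ ∣ k := fun h => hm <|
      (forall_dvd_iff_lcm_dvd_and_lcm_compl_dvd ℓ I m).2
        ⟨by simpa using dvd_sub (Int.natCast_dvd_natCast.2 h) hI, hIc⟩
    have hIck : ¬ Iᶜ.lcm ℓ ∣ k := fun h => hkm <|
      (forall_dvd_iff_lcm_dvd_and_lcm_compl_dvd ℓ I _).2
        ⟨hI, dvd_sub (Int.natCast_dvd_natCast.2 h) hIc⟩
    refine ⟨I, ?_, ?_, (Int.exists_dvd_sub_and_dvd_iff_gcd_dvd _ _ k).1 ⟨m, hI, hIc⟩, hIk, hIck⟩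
    · rintro hI; simp [hI] at hIk
    · rintro hI; simp [hI] at hIck
  · rintro ⟨I, -, -, hgcd, hIk, hIck⟩
    obtain ⟨m, hI, hIc⟩ := (Int.exists_dvd_sub_and_dvd_iff_gcd_dvd _ _ k).2 hgcd
    refine ⟨m, fun i => ?_, fun h => hIk ?_, fun h => hIck ?_⟩
    · by_cases hi : i ∈ I
      · exact .inr ((natCast_lcm_dvd_iff ℓ I _).1 hI i hi)
      · exact .inl ((natCast_lcm_dvd_iff ℓ Iᶜ _).1 hIc i (mem_compl.2 hi))
    · have hIm := ((forall_dvd_iff_lcm_dvd_and_lcm_compl_dvd ℓ I m).1 h).1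
      exact_mod_cast (by simpa using dvd_add hI hIm : ((I.lcm ℓ : ℕ) : ℤ) ∣ k)
    · have hIkm := ((forall_dvd_iff_lcm_dvd_and_lcm_compl_dvd ℓ I _).1 h).2
      exact_mod_cast (by simpa using dvd_add hIkm hIc : ((Iᶜ.lcm ℓ : ℕ) : ℤ) ∣ k)

end Finset

theorem decomposable_iff_exists_subset_general
    (n t : ℕ) (ℓ : Fin t → ℕ)
    (g : Equiv.Perm (Fin n))
    (hg : g.cycleType = Multiset.map ℓ Finset.univ.val)
    (k : ℕ) :
    DecomposableIn (Subgroup.zpowers g) (g ^ k)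
      ↔ ∃ I : Finset (Fin t), I ≠ ∅ ∧ I ≠ Finset.univ ∧
          Nat.gcd (I.lcm ℓ) (Iᶜ.lcm ℓ) ∣ k ∧
          ¬ (I.lcm ℓ ∣ k) ∧ ¬ (Iᶜ.lcm ℓ ∣ k) := by
  have hcycleType (P : ℕ → Prop) : (∀ c ∈ g.cycleType, P c) ↔ ∀ i, P (ℓ i) := by
    simp [hg]
  rw [← zpow_natCast, decomposableIn_zpowers_iff, ← Finset.exists_split_iff_exists_finset]
  simp only [Perm.disjoint_zpow_zpow_iff, Ne, Perm.zpow_eq_one_iff_forall_mem_cycleType,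
    hcycleType]

/-- Criterion for decomposability of `g^k` in the cyclic group `⟨g⟩`: `g^k` is decomposable
iff there is a proper nonempty subset `I` of the set of cycles such that
`gcd(d_I, d_{Iᶜ}) ∣ k` but neither `d_I ∣ k` nor `d_{Iᶜ} ∣ k`,
where `d_I = lcm(ℓ i : i ∈ I)`. -/
theorem decomposable_iff_exists_subset
    (n t : ℕ) (ℓ : Fin t → ℕ) (hℓ : ∀ i, 2 ≤ ℓ i)
    (g : Equiv.Perm (Fin n))
    (hg : g.cycleType = Multiset.map ℓ Finset.univ.val)
    (k : ℕ) (hk : k < orderOf g) :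
    DecomposableIn (Subgroup.zpowers g) (g ^ k)
      ↔ ∃ I : Finset (Fin t), I ≠ ∅ ∧ I ≠ Finset.univ ∧
          Nat.gcd (I.lcm ℓ) (Iᶜ.lcm ℓ) ∣ k ∧
          ¬ (I.lcm ℓ ∣ k) ∧ ¬ (Iᶜ.lcm ℓ ∣ k) :=
  decomposable_iff_exists_subset_general n t ℓ g hg k
end

section
/- Let G ≤ Equiv.Perm (Fin n) be a cyclic subgroup (G = ⟨g⟩ for some g), and let z ∈ G have disjoint cycle decomposition into r nontrivial cycles of lengths m 1, …, m r (i.e. z.cycleType = {m 1, …, m r} as a multiset, each m i ≥ 2). Then z is decomposable in G if and only if there exists a subset K with ∅ ≠ K ⊊ {1, …, r} such that gcd(m i, m j) = 1 for all i ∈ K and all j ∈ {1, …, r} \ K. -/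
/-!
If `z = h * k` with `h, k ∈ G` disjoint, then `⟨h⟩ ∩ ⟨k⟩ = 1`, so `⟨h⟩ × ⟨k⟩` embeds into the
cyclic group `G`. A product of two finite groups is cyclic only when their orders are coprime, so
`orderOf h` and `orderOf k` are coprime; the cycles of `z` are those of `h` together with those of
`k`, and their lengths divide `orderOf h`, resp. `orderOf k`, which gives the coprime split.
Conversely, given a coprime split `K`, choose `t ∈ ℤ` with `t ≡ 1` modulo every cycle length in
`K` and `t ≡ 0` modulo every other one: then `z ^ t` acts as `z` on the cycles indexed by `K` and
trivially on the others, and `z = z ^ t * z ^ (1 - t)` is the required decomposition.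
-/

open Equiv Equiv.Perm Subgroup

theorem exists_dvd_one_sub_and_dvd_of_isCoprime {R ι : Type*} [CommRing R] [Fintype ι]
    [DecidableEq ι] {m : ι → R} {K : Finset ι} (h : ∀ i ∈ K, ∀ j ∉ K, IsCoprime (m i) (m j)) :
    ∃ t : R, (∀ i ∈ K, m i ∣ 1 - t) ∧ ∀ j ∉ K, m j ∣ t := by
  obtain ⟨u, v, huv⟩ : IsCoprime (∏ i ∈ K, m i) (∏ j ∈ Kᶜ, m j) :=
    IsCoprime.prod_left fun i hi => IsCoprime.prod_right fun j hj =>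
      h i hi j (Finset.mem_compl.mp hj)
  refine ⟨v * ∏ j ∈ Kᶜ, m j, fun i hi => ?_, fun j hj => ?_⟩
  · rw [← huv, add_sub_cancel_right]
    exact (Finset.dvd_prod_of_mem m hi).mul_left u
  · exact (Finset.dvd_prod_of_mem m (Finset.mem_compl.mpr hj)).mul_left v

theorem zpow_ne_self_of_dvd {G : Type*} [Group G] {g : G} {n : ℕ} {s : ℤ} (hn : n ∣ orderOf g)
    (hn1 : n ≠ 1) (hs : (n : ℤ) ∣ s) : g ^ s ≠ g := by
  intro hgs
  have hs1 : (n : ℤ) ∣ s - 1 := (Int.natCast_dvd_natCast.mpr hn).trans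
    (orderOf_dvd_iff_zpow_eq_one.mpr (by rw [zpow_sub_one, hgs, mul_inv_cancel]))
  have : (n : ℤ) ∣ 1 := by simpa using dvd_sub hs hs1
  exact hn1 (Nat.dvd_one.mp (Int.natCast_dvd_natCast.mp this))

theorem Subgroup.coprime_card_of_disjoint {G : Type*} [Group G] {C H K : Subgroup G} [IsCyclic C]
    [Finite H] [Finite K] (hH : H ≤ C) (hK : K ≤ C) (hHK : Disjoint H K) :
    (Nat.card H).Coprime (Nat.card K) := by
  let _ : CommGroup C := IsCyclic.commGroup
  have hcomm : ∀ (a : H) (b : K), Commute (H.subtype a) (K.subtype b) := fun a b =>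
    congrArg Subtype.val (mul_comm (⟨a, hH a.2⟩ : C) ⟨b, hK b.2⟩)
  let f := MonoidHom.noncommCoprod H.subtype K.subtype hcomm
  have hf : Function.Injective f := (MonoidHom.noncommCoprod_injective _ _ hcomm).mpr
    ⟨H.subtype_injective, K.subtype_injective, by simpa using hHK⟩
  have hfC : ∀ x, f x ∈ C := fun x => mul_mem (hH x.1.2) (hK x.2.2)
  have : IsCyclic (H × K) := isCyclic_of_injective (f.codRestrict C hfC)
    fun x y hxy => hf (congrArg Subtype.val hxy)
  exact coprime_card_of_isCyclic_prod H K

namespace Equiv.Perm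

variable {α : Type*}

theorem Disjoint.disjoint_zpowers {σ τ : Perm α} (h : σ.Disjoint τ) :
    _root_.Disjoint (zpowers σ) (zpowers τ) := by
  rw [Subgroup.disjoint_def]
  rintro _ ⟨i, rfl⟩ ⟨j, hj : τ ^ j = σ ^ i⟩
  exact disjoint_refl_iff.mp (by simpa only [hj] using h.zpow_disjoint_zpow i j)

theorem coprime_orderOf_of_disjoint [Finite α] {C : Subgroup (Perm α)}
    [IsCyclic C] {σ τ : Perm α} (hσ : σ ∈ C) (hτ : τ ∈ C) (h : σ.Disjoint τ) :
    (orderOf σ).Coprime (orderOf τ) := by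
  simpa only [Nat.card_zpowers] using Subgroup.coprime_card_of_disjoint
    (zpowers_le.mpr hσ) (zpowers_le.mpr hτ) h.disjoint_zpowers

section Fintype

variable [Fintype α] [DecidableEq α]

theorem exists_coprime_split_of_disjoint {ι : Type*} [Fintype ι] {σ τ : Perm α} {m : ι → ℕ}
    (hστ : σ.Disjoint τ) (hcop : (orderOf σ).Coprime (orderOf τ)) (hσ : σ ≠ 1) (hτ : τ ≠ 1)
    (hm : (σ * τ).cycleType = Multiset.map m Finset.univ.val) :
    ∃ K : Finset ι, K ≠ ∅ ∧ K ≠ Finset.univ ∧ ∀ i ∈ K, ∀ j ∉ K, Nat.gcd (m i) (m j) = 1 := by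
  have hmem : ∀ c, c ∈ σ.cycleType ∨ c ∈ τ.cycleType ↔ ∃ i, m i = c := by
    simp [← Multiset.mem_add, ← hστ.cycleType_mul, hm]
  refine ⟨Finset.univ.filter (m · ∣ orderOf σ), ?_, ?_, fun i hi j hj => ?_⟩
  · obtain ⟨c, hc⟩ := Multiset.exists_mem_of_ne_zero (mt cycleType_eq_zero.mp hσ)
    obtain ⟨i, rfl⟩ := (hmem c).mp (.inl hc)
    exact Finset.ne_empty_of_mem (by simpa using dvd_of_mem_cycleType hc)
  · obtain ⟨c, hc⟩ := Multiset.exists_mem_of_ne_zero (mt cycleType_eq_zero.mp hτ)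
    obtain ⟨j, rfl⟩ := (hmem c).mp (.inr hc)
    intro hK
    have hjσ : m j ∣ orderOf σ := by simpa using Finset.eq_univ_iff_forall.mp hK j
    exact (one_lt_of_mem_cycleType hc).ne'
      (Nat.Coprime.eq_one_of_dvd (hcop.coprime_dvd_left hjσ) (dvd_of_mem_cycleType hc))
  · simp only [Finset.mem_filter, Finset.mem_univ, true_and] at hi hj
    have hjτ : m j ∣ orderOf τ := ((hmem (m j)).mpr ⟨j, rfl⟩).elim
      (fun h => absurd (dvd_of_mem_cycleType h) hj) dvd_of_mem_cycleType
    exact Nat.Coprime.of_dvd hi hjτ hcop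

theorem zpow_ne_self_of_mem_cycleType {σ : Perm α} {n : ℕ} {s : ℤ} (hn : n ∈ σ.cycleType)
    (hs : (n : ℤ) ∣ s) :
    σ ^ s ≠ σ :=
  zpow_ne_self_of_dvd (dvd_of_mem_cycleType hn) (one_lt_of_mem_cycleType hn).ne' hs

theorem orderOf_cycleOf_mem_cycleType {σ : Perm α} {x : α} (hx : σ x ≠ x) :
    orderOf (σ.cycleOf x) ∈ σ.cycleType := by
  rw [cycleType, Multiset.mem_map]
  refine ⟨σ.cycleOf x, ?_, ?_⟩
  · rwa [← Finset.mem_def, cycleOf_mem_cycleFactorsFinset_iff, mem_support]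
  · simp [(isCycle_cycleOf _ hx).orderOf]

theorem zpow_apply_eq_self_of_orderOf_cycleOf_dvd {σ : Perm α} {x : α} {s : ℤ}
    (h : (orderOf (σ.cycleOf x) : ℤ) ∣ s) : (σ ^ s) x = x := by
  rw [← cycleOf_zpow_apply_self, orderOf_dvd_iff_zpow_eq_one.mp h, one_apply]

theorem disjoint_zpow_zpow_of_forall_mem_cycleType {σ : Perm α} {a b : ℤ}
    (h : ∀ n ∈ σ.cycleType, (n : ℤ) ∣ a ∨ (n : ℤ) ∣ b) : (σ ^ a).Disjoint (σ ^ b) := by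
  intro x
  by_cases hx : σ x = x
  · exact .inl (zpow_apply_eq_self_of_apply_eq_self hx a)
  · exact (h _ (orderOf_cycleOf_mem_cycleType hx)).imp
      zpow_apply_eq_self_of_orderOf_cycleOf_dvd zpow_apply_eq_self_of_orderOf_cycleOf_dvd

end Fintype

end Equiv.Perm

theorem decomposableIn_of_forall_mem_cycleType_dvd {n : ℕ} {G : Subgroup (Perm (Fin n))}
    {z : Perm (Fin n)} (hz : z ∈ G) {t : ℤ}
    (h : ∀ c ∈ z.cycleType, (c : ℤ) ∣ t ∨ (c : ℤ) ∣ 1 - t)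
    (h₁ : ∃ c ∈ z.cycleType, (c : ℤ) ∣ 1 - t) (h₀ : ∃ c ∈ z.cycleType, (c : ℤ) ∣ t) :
    DecomposableIn G z := by
  obtain ⟨c₁, hc₁, hc₁t⟩ := h₁
  obtain ⟨c₀, hc₀, hc₀t⟩ := h₀
  refine ⟨z ^ t, zpow_mem hz t, ⟨z ^ (1 - t), disjoint_zpow_zpow_of_forall_mem_cycleType h,
    by rw [← zpow_add, add_sub_cancel, zpow_one]⟩, fun ht => ?_,
    zpow_ne_self_of_mem_cycleType hc₀ hc₀t⟩
  refine zpow_ne_self_of_mem_cycleType hc₁ hc₁t ?_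
  rw [zpow_sub, ht, zpow_one, inv_one, mul_one]

theorem decomposable_iff_coprime_split_general
    (n r : ℕ) (G : Subgroup (Equiv.Perm (Fin n)))
    (hcyc : ∃ g : Equiv.Perm (Fin n), G = Subgroup.zpowers g)
    (z : Equiv.Perm (Fin n)) (hz : z ∈ G)
    (m : Fin r → ℕ)
    (hzc : z.cycleType = Multiset.map m Finset.univ.val) :
    DecomposableIn G z
      ↔ ∃ K : Finset (Fin r), K ≠ ∅ ∧ K ≠ Finset.univ ∧
          ∀ i ∈ K, ∀ j ∉ K, Nat.gcd (m i) (m j) = 1 := by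
  obtain ⟨g, rfl⟩ := hcyc
  constructor
  · rintro ⟨h, hh, ⟨k, hhk, rfl⟩, h1, hk1⟩
    have hk : k ∈ zpowers g := by simpa using mul_mem (inv_mem hh) hz
    exact exists_coprime_split_of_disjoint hhk (coprime_orderOf_of_disjoint hh hk hhk) h1
      (by rintro rfl; exact hk1 (mul_one h).symm) hzc
  · rintro ⟨K, hK, hKu, hcop⟩
    obtain ⟨t, hK1, hKc⟩ := exists_dvd_one_sub_and_dvd_of_isCoprime (m := fun i => (m i : ℤ))
      fun i hi j hj => Nat.isCoprime_iff_coprime.mpr (hcop i hi j hj)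
    have hmem : ∀ i, m i ∈ z.cycleType := by simp [hzc]
    obtain ⟨i, hi⟩ := Finset.nonempty_iff_ne_empty.mpr hK
    obtain ⟨j, hj⟩ := not_forall.mp (mt Finset.eq_univ_iff_forall.mpr hKu)
    refine decomposableIn_of_forall_mem_cycleType_dvd hz ?_ ⟨_, hmem i, hK1 i hi⟩
      ⟨_, hmem j, hKc j hj⟩
    simp only [hzc, Multiset.mem_map, Finset.mem_val, Finset.mem_univ, true_and]
    rintro _ ⟨l, rfl⟩
    by_cases hl : l ∈ K
    exacts [.inr (hK1 l hl), .inl (hKc l hl)]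

/-- An element `z` of a cyclic permutation group, with cycle lengths `m 1, …, m r`, is
decomposable iff the index set splits into two nonempty parts on which the cycle lengths
are coprime. -/
theorem decomposable_iff_coprime_split
    (n r : ℕ) (G : Subgroup (Equiv.Perm (Fin n)))
    (hcyc : ∃ g : Equiv.Perm (Fin n), G = Subgroup.zpowers g)
    (z : Equiv.Perm (Fin n)) (hz : z ∈ G)
    (m : Fin r → ℕ) (hm : ∀ i, 2 ≤ m i)
    (hzc : z.cycleType = Multiset.map m Finset.univ.val) :
    DecomposableIn G z
      ↔ ∃ K : Finset (Fin r), K ≠ ∅ ∧ K ≠ Finset.univ ∧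
          ∀ i ∈ K, ∀ j ∉ K, Nat.gcd (m i) (m j) = 1 :=
  decomposable_iff_coprime_split_general n r G hcyc z hz m hzc
end

section
/- Let a, b ∈ ℕ. For k ∈ ℕ let L k denote the number of lattice points of the k-th dilate of the product of two unimodular simplices of dimensions a and b, i.e. L k := the number of pairs (u, v) with u : Fin (a+1) → ℕ, v : Fin (b+1) → ℕ, Σ i, u i = k and Σ j, v j = k. Then in the power series ring ℤ⟦t⟧: (1 − t)^(a+b+1) · (Σ_{k=0}^{∞} L k · t^k) = Σ_{i=0}^{min(a,b)} (a.choose i) · (b.choose i) · t^i. Equivalently, for all k ∈ ℕ: (k+a).choose a · (k+b).choose b = Σ_{i=0}^{min(a,b)} (a.choose i) · (b.choose i) · ((k+a+b−i).choose (a+b)). -/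
open PowerSeries

/-- The number of lattice points in the `k`-th dilate of `Δ_a × Δ_b`, i.e. the number of
pairs of vectors of naturals with coordinate sums `k`. -/
noncomputable def latticePointCount (a b k : ℕ) : ℕ :=
  Nat.card {p : (Fin (a + 1) → ℕ) × (Fin (b + 1) → ℕ) //
    (∑ i, p.1 i) = k ∧ (∑ j, p.2 j) = k}

/-! Stars and bars gives `L k = C(k+a,a) C(k+b,b)`. Since `1/(1-t)^(a+b+1)` has coefficients
`C(k+a+b,a+b)`, the series identity is, coefficientwise, the binomial identity, which follows
from Vandermonde convolution and trinomial revision: expand `C(k+a,a) = ∑_j C(a,j) C(k,a-j)`,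
absorb `C(k+b,b)` by `C(k,l) C(k+b,b) = C(l+b,l) C(k+b,l+b)`, expand
`C(a-j+b,a-j) = ∑_i C(a-j,i) C(b,i)`, swap the sums and collapse the sum over `j` back to
`C(k+a+b-i,a+b)` by Vandermonde. -/

open Finset

namespace Nat

theorem choose_mul_choose_sub_comm (n i j : ℕ) :
    n.choose i * (n - i).choose j = n.choose j * (n - j).choose i := by
  have h := choose_mul (n := n) (Nat.le_add_right i j)
  have h' := choose_mul (n := n) (Nat.le_add_left j i)
  rw [Nat.add_sub_cancel_left] at h
  rw [Nat.add_sub_cancel] at h'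
  rw [← h, ← h', choose_symm_add]

theorem choose_mul_add_choose (k l b : ℕ) :
    k.choose l * (k + b).choose b = (l + b).choose l * (k + b).choose (l + b) := by
  have h := choose_mul (n := k + b) (Nat.le_add_left b l)
  rw [Nat.add_sub_cancel, Nat.add_sub_cancel] at h
  rw [choose_symm_add, mul_comm, mul_comm ((l + b).choose b), h]

theorem add_choose_eq_sum_range {m N K : ℕ} (n : ℕ) (hmN : m ≤ N) (hNK : N ≤ K) :
    (m + n).choose K = ∑ j ∈ range (N + 1), m.choose j * n.choose (K - j) := by
  rw [add_choose_eq,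
    Nat.sum_antidiagonal_eq_sum_range_succ (fun i j => m.choose i * n.choose j)]
  refine eventually_constant_sum (fun j hj => ?_) (by omega)
  rw [choose_eq_zero_of_lt (by omega : m < j), zero_mul]

theorem sum_range_choose_mul_choose {m N : ℕ} (n : ℕ) (hmN : m ≤ N) :
    ∑ i ∈ range (N + 1), m.choose i * n.choose i = (m + n).choose m := by
  rw [add_choose_eq, ← Nat.sum_antidiagonal_swap]
  simp only [Prod.fst_swap, Prod.snd_swap]
  rw [Nat.sum_antidiagonal_eq_sum_range_succ (fun i j => m.choose j * n.choose i),
    eventually_constant_sum (fun i hi => ?_) (by omega : m + 1 ≤ N + 1)]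
  · refine sum_congr rfl fun i hi => ?_
    rw [choose_symm (by simpa [Nat.lt_succ_iff] using hi)]
  · rw [choose_eq_zero_of_lt (by omega : m < i), zero_mul]

end Nat

theorem add_choose_mul_add_choose_eq_sum (a b k : ℕ) :
    (k + a).choose a * (k + b).choose b
      = ∑ i ∈ range (min a b + 1),
          a.choose i * b.choose i * (k + a + b - i).choose (a + b) := by
  calc (k + a).choose a * (k + b).choose b
      = ∑ j ∈ range (a + 1), a.choose j * (k.choose (a - j) * (k + b).choose b) := by
        rw [add_comm k a, Nat.add_choose_eq_sum_range k le_rfl le_rfl, sum_mul]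
        simp_rw [mul_assoc]
    _ = ∑ j ∈ range (a + 1),
          a.choose j * (a - j + b).choose (a - j) * (k + b).choose (a + b - j) := by
        refine sum_congr rfl fun j hj => ?_
        rw [Nat.choose_mul_add_choose, show a - j + b = a + b - j by grind, mul_assoc]
    _ = ∑ j ∈ range (a + 1), ∑ i ∈ range (a + 1),
          a.choose i * b.choose i * ((a - i).choose j * (k + b).choose (a + b - j)) := by
        refine sum_congr rfl fun j _ => ?_
        rw [← Nat.sum_range_choose_mul_choose b (Nat.sub_le a j), mul_sum, sum_mul]
        refine sum_congr rfl fun i _ => ?_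
        rw [← mul_assoc, Nat.choose_mul_choose_sub_comm]
        ring
    _ = ∑ i ∈ range (a + 1), a.choose i * b.choose i *
          ∑ j ∈ range (a + 1), (a - i).choose j * (k + b).choose (a + b - j) := by
        rw [sum_comm]
        simp_rw [mul_sum]
    _ = ∑ i ∈ range (a + 1), a.choose i * b.choose i * (k + a + b - i).choose (a + b) := by
        refine sum_congr rfl fun i hi => ?_
        rw [← Nat.add_choose_eq_sum_range (k + b) (Nat.sub_le a i) (Nat.le_add_right a b),
          show a - i + (k + b) = k + a + b - i by grind]
    _ = _ := by
        refine eventually_constant_sum (fun i hi => ?_) (by omega)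
        obtain hai | hbi : a < i ∨ b < i := by omega
        · rw [Nat.choose_eq_zero_of_lt hai, zero_mul, zero_mul]
        · rw [Nat.choose_eq_zero_of_lt hbi, mul_zero, zero_mul]

theorem card_fin_succ_sum_eq (m k : ℕ) :
    Nat.card {P : Fin (m + 1) → ℕ // ∑ i, P i = k} = (k + m).choose m := by
  rw [← Nat.card_congr (Sym.equivNatSumOfFintype (Fin (m + 1)) k), Nat.card_eq_fintype_card,
    Sym.card_sym_eq_choose, Fintype.card_fin, show m + 1 + k - 1 = k + m by omega,
    Nat.choose_symm_add]

theorem latticePointCount_eq (a b k : ℕ) :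
    latticePointCount a b k = (k + a).choose a * (k + b).choose b := by
  rw [latticePointCount, Nat.card_congr (Equiv.subtypeProdEquivProd
      (p := fun u : Fin (a + 1) → ℕ => ∑ i, u i = k)
      (q := fun v : Fin (b + 1) → ℕ => ∑ j, v j = k)),
    Nat.card_prod, card_fin_succ_sum_eq, card_fin_succ_sum_eq]

theorem PowerSeries.coeff_invOneSubPow_mul_sum {R : Type*} [CommRing R] {d n : ℕ} (k : ℕ)
    (c : ℕ → R) (hn : n ≤ d + 1) :
    coeff k ((invOneSubPow R (d + 1)).val * ∑ i ∈ range n, C (c i) * X ^ i)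
      = ∑ i ∈ range n, c i * (k + d - i).choose d := by
  rw [invOneSubPow_val_succ_eq_mk_add_choose, mul_sum, map_sum]
  refine sum_congr rfl fun i hi => ?_
  rw [← mul_assoc, mul_comm _ (C (c i)), mul_assoc, coeff_C_mul, coeff_mul_X_pow', coeff_mk]
  split_ifs with hik
  · rw [show d + (k - i) = k + d - i by omega]
  · rw [Nat.choose_eq_zero_of_lt (by grind : k + d - i < d), Nat.cast_zero, mul_zero]

/-- The Ehrhart series of a product of unimodular simplices `Δ_a × Δ_b`:
`(1 - t)^(a+b+1) ∑_k L_k t^k = ∑_{i=0}^{min(a,b)} C(a,i) C(b,i) t^i`, equivalently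
`C(k+a,a) C(k+b,b) = ∑_{i=0}^{min(a,b)} C(a,i) C(b,i) C(k+a+b-i, a+b)`. -/
theorem ehrhart_series_product_simplices (a b : ℕ) :
    ((1 - X) ^ (a + b + 1) *
        PowerSeries.mk (fun k => (latticePointCount a b k : ℤ))
      = ∑ i ∈ Finset.range (min a b + 1),
          PowerSeries.C ((a.choose i * b.choose i : ℕ) : ℤ) * X ^ i) ∧
    (∀ k : ℕ,
      (k + a).choose a * (k + b).choose b
        = ∑ i ∈ Finset.range (min a b + 1),
            a.choose i * b.choose i * ((k + a + b - i).choose (a + b))) := by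
  refine ⟨?_, add_choose_mul_add_choose_eq_sum a b⟩
  have hseries : mk (fun k => (latticePointCount a b k : ℤ))
      = (invOneSubPow ℤ (a + b + 1)).val *
          ∑ i ∈ range (min a b + 1), C ((a.choose i * b.choose i : ℕ) : ℤ) * X ^ i := by
    ext k
    rw [coeff_mk, coeff_invOneSubPow_mul_sum _ _ (by omega), latticePointCount_eq,
      add_choose_mul_add_choose_eq_sum]
    push_cast
    simp only [add_assoc]
  rw [hseries, ← invOneSubPow_inv_eq_one_sub_pow, ← mul_assoc, Units.inv_val, one_mul]
end

section
/- Let a, b, c ≥ 2 be pairwise coprime, n = a*b + a*c + b*c, g ∈ Equiv.Perm (Fin n) with g.cycleType = {a*b, a*c, b*c}, and P = P(⟨g⟩). For m ∈ ℕ write ρ_x(m) := (m mod a, m mod b), ρ_y(m) := (m mod a, m mod c), ρ_z(m) := (m mod b, m mod c). Let S_x be a proper subset of (ZMod a) × (ZMod b), S_y a proper subset of (ZMod a) × (ZMod c), S_z a proper subset of (ZMod b) × (ZMod c), and for i ∈ {x, y, z} set F_i := {m ∈ Finset.range (a*b*c) | ρ_i(m) ∈ S_i}. Assume: (1) F_x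 ∩ F_y ∩ F_z = ∅; and (2) for every permutation (i, j, k) of (x, y, z): if m ∈ F_i and there exists m' ∈ F_i ∩ F_j with ρ_k(m) = ρ_k(m'), then m ∈ F_j. Then convexHull ℝ {M(g^m) | m ∈ F_x ∪ F_y ∪ F_z} is an exposed face of P (not necessarily proper). -/
open Finset

section ExposedFaces

variable {E : Type*} [AddCommGroup E] [Module ℝ E]

theorem Finset.mem_convexHull_sep_of_apply_eq {s : Finset E} {l : E →ₗ[ℝ] ℝ} {c : ℝ}
    (hs : ∀ v ∈ s, l v ≤ c) {x : E} (hx : x ∈ convexHull ℝ (s : Set E)) (hlx : l x = c) :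
    x ∈ convexHull ℝ {v | v ∈ s ∧ l v = c} := by
  classical
  obtain ⟨w, hw₀, hw₁, rfl⟩ := Finset.mem_convexHull'.1 hx
  have hgap : ∑ v ∈ s, w v * (c - l v) = 0 := by
    simp only [mul_sub, sum_sub_distrib, ← sum_mul, hw₁, one_mul, ← hlx, map_sum, map_smul,
      smul_eq_mul, sub_self]
  have hsupp : ∀ v ∈ s, w v ≠ 0 → l v = c := fun v hv hwv => by
    have := (sum_eq_zero_iff_of_nonneg fun u hu => mul_nonneg (hw₀ u hu)
      (sub_nonneg.2 (hs u hu))).1 hgap v hv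
    linarith [(mul_eq_zero.1 this).resolve_left hwv]
  refine convexHull_mono (fun v hv => mem_filter.1 hv) <| Finset.mem_convexHull'.2
    ⟨w, fun v hv => hw₀ v (mem_filter.1 hv).1, ?_, ?_⟩
  · rwa [sum_filter_of_ne hsupp]
  · exact sum_filter_of_ne fun v hv hwv => hsupp v hv (left_ne_zero_of_smul hwv)

theorem Finset.isExposed_convexHull_sep_apply_eq_of_le [TopologicalSpace E] (s : Finset E)
    (l : StrongDual ℝ E) {c : ℝ} (hs : ∀ v ∈ s, l v ≤ c) :
    IsExposed ℝ (convexHull ℝ (s : Set E)) (convexHull ℝ {v | v ∈ s ∧ l v = c}) := by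
  rintro ⟨x₀, hx₀⟩
  have hle : ∀ x ∈ convexHull ℝ (s : Set E), l x ≤ c := fun x hx =>
    convexHull_min hs (convex_halfSpace_le l.toLinearMap.isLinear c) hx
  have hface : ∀ x ∈ convexHull ℝ {v | v ∈ s ∧ l v = c}, l x = c := fun x hx =>
    convexHull_min (fun v hv => hv.2) (convex_hyperplane l.toLinearMap.isLinear c) hx
  have hsub : convexHull ℝ {v | v ∈ s ∧ l v = c} ⊆ convexHull ℝ (s : Set E) :=
    convexHull_mono fun v hv => hv.1
  refine ⟨l, Set.Subset.antisymm (fun x hx => ⟨hsub hx, fun y hy => hface x hx ▸ hle y hy⟩) ?_⟩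
  rintro x ⟨hx, hmax⟩
  exact mem_convexHull_sep_of_apply_eq (l := l.toLinearMap) hs hx
    (le_antisymm (hle x hx) (hface x₀ hx₀ ▸ hmax x₀ (hsub hx₀)))

end ExposedFaces

namespace Equiv.Perm

variable {α : Type*} [DecidableEq α]

theorem exists_pow_apply_eq_pow_apply_iff_of_mem_cycleType [Fintype α] {σ : Perm α} {L : ℕ}
    (hL : L ∈ σ.cycleType) : ∃ p, ∀ i j : ℕ, (σ ^ i) p = (σ ^ j) p ↔ i ≡ j [MOD L] := by
  obtain ⟨τ, hτ, rfl⟩ := Multiset.mem_map.1 hL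
  obtain ⟨p, hp⟩ := (mem_cycleFactorsFinset_iff.1 hτ).1.nonempty_support
  rw [Function.comp_apply, cycle_is_cycleOf hp hτ]
  exact ⟨p, fun i j => (isCycleOn_support_cycleOf σ p).pow_apply_eq_pow_apply
    (cycle_is_cycleOf hp hτ ▸ hp)⟩

noncomputable def orbitFunctional (σ : Perm α) (p : α) (L : ℕ) (φ : ℕ → ℝ) :
    Matrix α α ℝ →ₗ[ℝ] ℝ :=
  ∑ j ∈ range L, φ j • Matrix.entryLinearMap ℝ ℝ p ((σ ^ j) p)

theorem orbitFunctional_permMatrix_pow {σ : Perm α} {p : α} {L : ℕ} (hL : 0 < L)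
    (hp : ∀ i j : ℕ, (σ ^ i) p = (σ ^ j) p ↔ i ≡ j [MOD L]) (φ : ℕ → ℝ) (m : ℕ) :
    orbitFunctional σ p L φ ((σ ^ m).permMatrix ℝ) = φ (m % L) := by
  have hentry : ∀ j ∈ range L,
      ((σ ^ m).permMatrix ℝ) p ((σ ^ j) p) = if m % L = j then 1 else 0 := by
    intro j hj
    rw [← Nat.mod_eq_of_lt (mem_range.1 hj)]
    simp [PEquiv.toMatrix_apply, hp, Nat.ModEq]
  simp only [orbitFunctional, LinearMap.sum_apply, LinearMap.smul_apply,
    Matrix.entryLinearMap_apply, smul_eq_mul]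
  rw [sum_congr rfl fun j hj => by rw [hentry j hj]]
  simp [Nat.mod_lt m hL]

end Equiv.Perm

section PermPolytope

variable {n : ℕ} (g : Equiv.Perm (Fin n)) {N : ℕ}

theorem permPolytope_zpowers_eq_convexHull_image (hN : 0 < N) (hgN : g ^ N = 1) :
    permPolytope n (Subgroup.zpowers g) =
      convexHull ℝ ((range N).image fun m => (g ^ m).permMatrix ℝ : Set _) := by
  unfold permPolytope
  congr 1
  ext M
  simp only [mem_zpowers_iff_mem_range_orderOf, Set.mem_ofPred_eq, coe_image, coe_range,
    Set.mem_image, Set.mem_Iio, mem_image, mem_range]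
  constructor
  · rintro ⟨_, ⟨m, hm, rfl⟩, rfl⟩
    exact ⟨m, hm.trans_le (orderOf_le_of_pow_eq_one hN hgN), rfl⟩
  · rintro ⟨m, -, rfl⟩
    exact ⟨_, ⟨m % orderOf g, Nat.mod_lt m (orderOf_pos g), rfl⟩, by rw [pow_mod_orderOf]⟩

theorem isExposed_permPolytope_zpowers (hN : 0 < N) (hgN : g ^ N = 1)
    (l : Matrix (Fin n) (Fin n) ℝ →ₗ[ℝ] ℝ) {F : Set ℕ}
    (h_one : ∀ m ∈ F, l ((g ^ m).permMatrix ℝ) = 1)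
    (h_lt : ∀ m < N, m ∉ F → l ((g ^ m).permMatrix ℝ) < 1) :
    IsExposed ℝ (permPolytope n (Subgroup.zpowers g))
      (convexHull ℝ {M | ∃ m ∈ F, M = (g ^ m).permMatrix ℝ}) := by
  set V := (range N).image fun m => (g ^ m).permMatrix ℝ
  have hface : {M | ∃ m ∈ F, M = (g ^ m).permMatrix ℝ} =
      {M | M ∈ V ∧ LinearMap.toContinuousLinearMap l M = 1} := by
    ext M
    simp only [V, LinearMap.coe_toContinuousLinearMap', mem_image, mem_range]
    constructor
    · rintro ⟨m, hm, rfl⟩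
      exact ⟨⟨m % N, Nat.mod_lt m hN, by rw [← pow_eq_pow_mod m hgN]⟩, h_one m hm⟩
    · rintro ⟨⟨m, hm, rfl⟩, hlm⟩
      exact ⟨m, not_not.1 fun hmF => (h_lt m hm hmF).ne hlm, rfl⟩
  rw [permPolytope_zpowers_eq_convexHull_image g hN hgN, hface]
  refine V.isExposed_convexHull_sep_apply_eq_of_le _ fun M hM => ?_
  obtain ⟨m, hm, rfl⟩ := mem_image.1 hM
  rw [LinearMap.coe_toContinuousLinearMap']
  by_cases hmF : m ∈ F
  exacts [(h_one m hmF).le, (h_lt m (mem_range.1 hm) hmF).le]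

end PermPolytope

section FaceWeight

variable {X Y : Type*}

open Classical in
noncomputable def faceWeight (S U : Set Y) (y : Y) : ℝ :=
  if y ∈ S then 1 else if y ∈ U then -1 else 0

/-- Inside `G`, the set `G ∩ H` is a union of fibres of `ρ`. -/
def InterSaturated (ρ : X → Y) (G H : Set X) : Prop :=
  ∀ m ∈ G, (∃ m' ∈ G ∩ H, ρ m = ρ m') → m ∈ H

variable {S U : Set Y} {y : Y}

theorem faceWeight_of_mem (h : y ∈ S) : faceWeight S U y = 1 := by
  simp [faceWeight, h]

theorem faceWeight_nonpos (h : y ∉ S) : faceWeight S U y ≤ 0 := by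
  unfold faceWeight; split_ifs <;> norm_num

variable {ρ : X → Y} {G H : Set X} {m : X}

theorem faceWeight_image_inter_of_mem (hm : m ∈ G ∩ H) (hS : ρ m ∉ S) :
    faceWeight S (ρ '' (G ∩ H)) (ρ m) = -1 := by
  simp [faceWeight, hS, Set.mem_image_of_mem ρ hm]

theorem InterSaturated.faceWeight_eq_zero (hGH : InterSaturated ρ G H) (hmG : m ∈ G) (hmH : m ∉ H)
    (hS : ρ m ∉ S) : faceWeight S (ρ '' (G ∩ H)) (ρ m) = 0 := by
  have hU : ρ m ∉ ρ '' (G ∩ H) := fun ⟨m', hm', he⟩ => hmH (hGH m hmG ⟨m', hm', he.symm⟩)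
  simp [faceWeight, hS, hU]

end FaceWeight

section ThreeCoordinates

variable {X Yx Yy Yz : Type*} {D : Set X} {ρx : X → Yx} {ρy : X → Yy} {ρz : X → Yz}
  {Sx : Set Yx} {Sy : Set Yy} {Sz : Set Yz} {Fx Fy Fz : Set X} {m : X}

theorem faceWeight_add_add_eq_one (hFx : Fx = {m | m ∈ D ∧ ρx m ∈ Sx})
    (hFy : Fy = {m | m ∈ D ∧ ρy m ∈ Sy}) (hFz : Fz = {m | m ∈ D ∧ ρz m ∈ Sz})
    (h1 : Fx ∩ Fy ∩ Fz = ∅)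
    (hxy : InterSaturated ρz Fx Fy) (hxz : InterSaturated ρy Fx Fz) (hyx : InterSaturated ρz Fy Fx)
    (hyz : InterSaturated ρx Fy Fz) (hzx : InterSaturated ρy Fz Fx) (hzy : InterSaturated ρx Fz Fy)
    (hm : m ∈ Fx ∪ Fy ∪ Fz) :
    faceWeight Sx (ρx '' (Fy ∩ Fz)) (ρx m) + faceWeight Sy (ρy '' (Fx ∩ Fz)) (ρy m) +
      faceWeight Sz (ρz '' (Fx ∩ Fy)) (ρz m) = 1 := by
  have hmD : m ∈ D := by
    rw [hFx, hFy, hFz] at hm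
    rcases hm with (⟨hmD, -⟩ | ⟨hmD, -⟩) | ⟨hmD, -⟩ <;> exact hmD
  have hmx : m ∈ Fx ↔ ρx m ∈ Sx := by simp [hFx, hmD]
  have hmy : m ∈ Fy ↔ ρy m ∈ Sy := by simp [hFy, hmD]
  have hmz : m ∈ Fz ↔ ρz m ∈ Sz := by simp [hFz, hmD]
  have hxyz : m ∉ Fx ∩ Fy ∩ Fz := h1 ▸ Set.notMem_empty m
  by_cases hx : m ∈ Fx <;> by_cases hy : m ∈ Fy <;> by_cases hz : m ∈ Fz
  · exact absurd ⟨⟨hx, hy⟩, hz⟩ hxyz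
  · rw [faceWeight_of_mem (hmx.1 hx), faceWeight_of_mem (hmy.1 hy),
      faceWeight_image_inter_of_mem ⟨hx, hy⟩ (mt hmz.2 hz)]
    norm_num
  · rw [faceWeight_of_mem (hmx.1 hx), faceWeight_image_inter_of_mem ⟨hx, hz⟩ (mt hmy.2 hy),
      faceWeight_of_mem (hmz.1 hz)]
    norm_num
  · rw [faceWeight_of_mem (hmx.1 hx), hxz.faceWeight_eq_zero hx hz (mt hmy.2 hy),
      hxy.faceWeight_eq_zero hx hy (mt hmz.2 hz)]
    norm_num
  · rw [faceWeight_image_inter_of_mem ⟨hy, hz⟩ (mt hmx.2 hx), faceWeight_of_mem (hmy.1 hy),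
      faceWeight_of_mem (hmz.1 hz)]
    norm_num
  · rw [hyz.faceWeight_eq_zero hy hz (mt hmx.2 hx), faceWeight_of_mem (hmy.1 hy),
      Set.inter_comm, hyx.faceWeight_eq_zero hy hx (mt hmz.2 hz)]
    norm_num
  · rw [Set.inter_comm Fy, hzy.faceWeight_eq_zero hz hy (mt hmx.2 hx), Set.inter_comm Fx,
      hzx.faceWeight_eq_zero hz hx (mt hmy.2 hy), faceWeight_of_mem (hmz.1 hz)]
    norm_num
  · simp [hx, hy, hz] at hm

theorem faceWeight_add_add_nonpos (hFx : Fx = {m | m ∈ D ∧ ρx m ∈ Sx})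
    (hFy : Fy = {m | m ∈ D ∧ ρy m ∈ Sy}) (hFz : Fz = {m | m ∈ D ∧ ρz m ∈ Sz})
    (hmD : m ∈ D) (hm : m ∉ Fx ∪ Fy ∪ Fz) :
    faceWeight Sx (ρx '' (Fy ∩ Fz)) (ρx m) + faceWeight Sy (ρy '' (Fx ∩ Fz)) (ρy m) +
      faceWeight Sz (ρz '' (Fx ∩ Fy)) (ρz m) ≤ 0 := by
  simp only [hFx, hFy, hFz, Set.mem_union, Set.mem_ofPred_eq, hmD, true_and, not_or] at hm
  linarith [faceWeight_nonpos (U := ρx '' (Fy ∩ Fz)) hm.1.1,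
    faceWeight_nonpos (U := ρy '' (Fx ∩ Fz)) hm.1.2, faceWeight_nonpos (U := ρz '' (Fx ∩ Fy)) hm.2]

end ThreeCoordinates

theorem ZMod.natCast_mod_of_dvd {a k : ℕ} (h : a ∣ k) (m : ℕ) : ((m % k : ℕ) : ZMod a) = m := by
  rw [ZMod.natCast_eq_natCast_iff', Nat.mod_mod_of_dvd m h]

theorem face_criterion_three_cycles_general
    (a b c : ℕ) (ha : 2 ≤ a) (hb : 2 ≤ b) (hc : 2 ≤ c)
    (n : ℕ)
    (g : Equiv.Perm (Fin n))
    (hg : g.cycleType = {a * b, a * c, b * c})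
    (Sx : Set (ZMod a × ZMod b))
    (Sy : Set (ZMod a × ZMod c))
    (Sz : Set (ZMod b × ZMod c))
    (Fx Fy Fz : Set ℕ)
    (hFx : Fx = {m : ℕ | m < a * b * c ∧ ((m : ZMod a), (m : ZMod b)) ∈ Sx})
    (hFy : Fy = {m : ℕ | m < a * b * c ∧ ((m : ZMod a), (m : ZMod c)) ∈ Sy})
    (hFz : Fz = {m : ℕ | m < a * b * c ∧ ((m : ZMod b), (m : ZMod c)) ∈ Sz})
    (h1 : Fx ∩ Fy ∩ Fz = ∅)
    (hxyz : ∀ m ∈ Fx, (∃ m' ∈ Fx ∩ Fy,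
      ((m : ZMod b), (m : ZMod c)) = ((m' : ZMod b), (m' : ZMod c))) → m ∈ Fy)
    (hxzy : ∀ m ∈ Fx, (∃ m' ∈ Fx ∩ Fz,
      ((m : ZMod a), (m : ZMod c)) = ((m' : ZMod a), (m' : ZMod c))) → m ∈ Fz)
    (hyxz : ∀ m ∈ Fy, (∃ m' ∈ Fy ∩ Fx,
      ((m : ZMod b), (m : ZMod c)) = ((m' : ZMod b), (m' : ZMod c))) → m ∈ Fx)
    (hyzx : ∀ m ∈ Fy, (∃ m' ∈ Fy ∩ Fz,
      ((m : ZMod a), (m : ZMod b)) = ((m' : ZMod a), (m' : ZMod b))) → m ∈ Fz)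
    (hzxy : ∀ m ∈ Fz, (∃ m' ∈ Fz ∩ Fx,
      ((m : ZMod a), (m : ZMod c)) = ((m' : ZMod a), (m' : ZMod c))) → m ∈ Fx)
    (hzyx : ∀ m ∈ Fz, (∃ m' ∈ Fz ∩ Fy,
      ((m : ZMod a), (m : ZMod b)) = ((m' : ZMod a), (m' : ZMod b))) → m ∈ Fy) :
    IsExposed ℝ (permPolytope n (Subgroup.zpowers g))
      (convexHull ℝ {M : Matrix (Fin n) (Fin n) ℝ |
        ∃ m ∈ Fx ∪ Fy ∪ Fz, M = (g ^ m).permMatrix ℝ}) := by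
  have hN : 0 < a * b * c := by positivity
  have hgN : g ^ (a * b * c) = 1 := by
    rw [← orderOf_dvd_iff_pow_eq_one, ← Equiv.Perm.lcm_cycleType, hg, Multiset.lcm_dvd]
    simpa using ⟨⟨b, by ring⟩, ⟨a, by ring⟩⟩
  obtain ⟨p₁, hp₁⟩ := Equiv.Perm.exists_pow_apply_eq_pow_apply_iff_of_mem_cycleType
    (by simp [hg] : a * b ∈ g.cycleType)
  obtain ⟨p₂, hp₂⟩ := Equiv.Perm.exists_pow_apply_eq_pow_apply_iff_of_mem_cycleType
    (by simp [hg] : a * c ∈ g.cycleType)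
  obtain ⟨p₃, hp₃⟩ := Equiv.Perm.exists_pow_apply_eq_pow_apply_iff_of_mem_cycleType
    (by simp [hg] : b * c ∈ g.cycleType)
  set ρx : ℕ → ZMod a × ZMod b := fun m => (m, m)
  set ρy : ℕ → ZMod a × ZMod c := fun m => (m, m)
  set ρz : ℕ → ZMod b × ZMod c := fun m => (m, m)
  set l := g.orbitFunctional p₁ (a * b) (fun j => faceWeight Sx (ρx '' (Fy ∩ Fz)) (ρx j)) +
    g.orbitFunctional p₂ (a * c) (fun j => faceWeight Sy (ρy '' (Fx ∩ Fz)) (ρy j)) +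
    g.orbitFunctional p₃ (b * c) (fun j => faceWeight Sz (ρz '' (Fx ∩ Fy)) (ρz j))
  have hl : ∀ m, l ((g ^ m).permMatrix ℝ) = faceWeight Sx (ρx '' (Fy ∩ Fz)) (ρx m) +
      faceWeight Sy (ρy '' (Fx ∩ Fz)) (ρy m) + faceWeight Sz (ρz '' (Fx ∩ Fy)) (ρz m) := by
    intro m
    simp [l, Equiv.Perm.orbitFunctional_permMatrix_pow (by positivity) hp₁,
      Equiv.Perm.orbitFunctional_permMatrix_pow (by positivity) hp₂,
      Equiv.Perm.orbitFunctional_permMatrix_pow (by positivity) hp₃, ρx, ρy, ρz,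
      ZMod.natCast_mod_of_dvd]
  refine isExposed_permPolytope_zpowers g hN hgN l (fun m hm => ?_) (fun m hm hmF => ?_)
  · rw [hl]
    exact faceWeight_add_add_eq_one (D := Set.Iio (a * b * c)) hFx hFy hFz h1
      hxyz hxzy hyxz hyzx hzxy hzyx hm
  · rw [hl]
    linarith [faceWeight_add_add_nonpos (D := Set.Iio (a * b * c)) hFx hFy hFz hm hmF]

/-- Face criterion for `P(a,b,c)`: if the vertex sets `F_x, F_y, F_z` determined by proper
subsets `S_x, S_y, S_z` of the residue pairs satisfy the intersection conditions, then the
convex hull of the corresponding vertices is an exposed face of `P(a,b,c)`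
(possibly not proper). -/
theorem face_criterion_three_cycles
    (a b c : ℕ) (ha : 2 ≤ a) (hb : 2 ≤ b) (hc : 2 ≤ c)
    (hab : Nat.Coprime a b) (hac : Nat.Coprime a c) (hbc : Nat.Coprime b c)
    (n : ℕ) (hn : n = a * b + a * c + b * c)
    (g : Equiv.Perm (Fin n))
    (hg : g.cycleType = {a * b, a * c, b * c})
    (Sx : Set (ZMod a × ZMod b)) (hSx : Sx ≠ Set.univ)
    (Sy : Set (ZMod a × ZMod c)) (hSy : Sy ≠ Set.univ)
    (Sz : Set (ZMod b × ZMod c)) (hSz : Sz ≠ Set.univ)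
    (Fx Fy Fz : Set ℕ)
    (hFx : Fx = {m : ℕ | m < a * b * c ∧ ((m : ZMod a), (m : ZMod b)) ∈ Sx})
    (hFy : Fy = {m : ℕ | m < a * b * c ∧ ((m : ZMod a), (m : ZMod c)) ∈ Sy})
    (hFz : Fz = {m : ℕ | m < a * b * c ∧ ((m : ZMod b), (m : ZMod c)) ∈ Sz})
    (h1 : Fx ∩ Fy ∩ Fz = ∅)
    (hxyz : ∀ m ∈ Fx, (∃ m' ∈ Fx ∩ Fy,
      ((m : ZMod b), (m : ZMod c)) = ((m' : ZMod b), (m' : ZMod c))) → m ∈ Fy)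
    (hxzy : ∀ m ∈ Fx, (∃ m' ∈ Fx ∩ Fz,
      ((m : ZMod a), (m : ZMod c)) = ((m' : ZMod a), (m' : ZMod c))) → m ∈ Fz)
    (hyxz : ∀ m ∈ Fy, (∃ m' ∈ Fy ∩ Fx,
      ((m : ZMod b), (m : ZMod c)) = ((m' : ZMod b), (m' : ZMod c))) → m ∈ Fx)
    (hyzx : ∀ m ∈ Fy, (∃ m' ∈ Fy ∩ Fz,
      ((m : ZMod a), (m : ZMod b)) = ((m' : ZMod a), (m' : ZMod b))) → m ∈ Fz)
    (hzxy : ∀ m ∈ Fz, (∃ m' ∈ Fz ∩ Fx,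
      ((m : ZMod a), (m : ZMod c)) = ((m' : ZMod a), (m' : ZMod c))) → m ∈ Fx)
    (hzyx : ∀ m ∈ Fz, (∃ m' ∈ Fz ∩ Fy,
      ((m : ZMod a), (m : ZMod b)) = ((m' : ZMod a), (m' : ZMod b))) → m ∈ Fy) :
    IsExposed ℝ (permPolytope n (Subgroup.zpowers g))
      (convexHull ℝ {M : Matrix (Fin n) (Fin n) ℝ |
        ∃ m ∈ Fx ∪ Fy ∪ Fz, M = (g ^ m).permMatrix ℝ}) :=
  face_criterion_three_cycles_general a b c ha hb hc n g hg Sx Sy Sz Fx Fy Fz hFx hFy hFz h1 hxyz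
    hxzy hyxz hyzx hzxy hzyx
end

section
/- Let α, β, γ be types and let I, I' ⊆ α, J, J' ⊆ β, K, K' ⊆ γ all be nonempty proper subsets. If (I ×ˢ J ×ˢ K) ∪ (Iᶜ ×ˢ Jᶜ ×ˢ Kᶜ) = (I' ×ˢ J' ×ˢ K') ∪ (I'ᶜ ×ˢ J'ᶜ ×ˢ K'ᶜ) as subsets of α × β × γ, then either (I, J, K) = (I', J', K') or (I, J, K) = (I'ᶜ, J'ᶜ, K'ᶜ). In particular, for pairwise coprime a, b, c ≥ 2 the number of distinct 'checkerboard' sets (I ×ˢ J ×ˢ K) ∪ (Iᶜ ×ˢ Jᶜ ×ˢ Kᶜ) with I, J, K nonempty proper subsets of ZMod a, ZMod b, ZMod c respectively is (2^a − 2)(2^b − 2)(2^c − 2)/2. -/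
/-!
A point `(x, y, z)` of `I ×ˢ J ×ˢ K` lies on the checkerboard, hence in `I' ×ˢ J' ×ˢ K'` or in
`I'ᶜ ×ˢ J'ᶜ ×ˢ K'ᶜ`; in the second case replace the primed triple by its complement, which has the
same checkerboard. Moving a single coordinate away from `(x, y, z)` keeps the other two inside both
triples, so membership in the checkerboard then reads off `I` and `I'` (resp. `J, J'` or `K, K'`).

For the count, fix a point `x₀`: each checkerboard comes from exactly one triple with `x₀ ∈ I`, and
complementation matches these triples with the remaining ones, so they are half of all triples.
-/

open Set

section Checkerboard

variable {α β γ : Type*}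

def checkerboard (I : Set α) (J : Set β) (K : Set γ) : Set (α × β × γ) :=
  I ×ˢ J ×ˢ K ∪ Iᶜ ×ˢ Jᶜ ×ˢ Kᶜ

variable {I I' : Set α} {J J' : Set β} {K K' : Set γ}

@[simp]
theorem mem_checkerboard {x : α} {y : β} {z : γ} :
    (x, y, z) ∈ checkerboard I J K ↔ (x ∈ I ∧ y ∈ J ∧ z ∈ K) ∨ (x ∉ I ∧ y ∉ J ∧ z ∉ K) := by
  simp [checkerboard]

theorem checkerboard_compl (I : Set α) (J : Set β) (K : Set γ) :
    checkerboard Iᶜ Jᶜ Kᶜ = checkerboard I J K := by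
  simp only [checkerboard, compl_compl]
  exact union_comm _ _

theorem eq_of_checkerboard_eq_of_mem {x : α} {y : β} {z : γ}
    (hx : x ∈ I) (hy : y ∈ J) (hz : z ∈ K) (hx' : x ∈ I') (hy' : y ∈ J') (hz' : z ∈ K')
    (h : checkerboard I J K = checkerboard I' J' K') : I = I' ∧ J = J' ∧ K = K' := by
  have hmem (x : α) (y : β) (z : γ) := mem_checkerboard.symm.trans <|
    (Set.ext_iff.1 h (x, y, z)).trans mem_checkerboard
  refine ⟨Set.ext fun x => ?_, Set.ext fun y => ?_, Set.ext fun z => ?_⟩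
  all_goals have := hmem x y z; tauto

theorem checkerboard_eq_checkerboard_iff (hI : I.Nonempty) (hJ : J.Nonempty) (hK : K.Nonempty) :
    checkerboard I J K = checkerboard I' J' K' ↔
      (I = I' ∧ J = J' ∧ K = K') ∨ (I = I'ᶜ ∧ J = J'ᶜ ∧ K = K'ᶜ) := by
  constructor
  · intro h
    obtain ⟨x, hx⟩ := hI
    obtain ⟨y, hy⟩ := hJ
    obtain ⟨z, hz⟩ := hK
    have hxyz : (x, y, z) ∈ checkerboard I' J' K' := h ▸ mem_checkerboard.2 (.inl ⟨hx, hy, hz⟩)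
    rcases mem_checkerboard.1 hxyz with ⟨hx', hy', hz'⟩ | ⟨hx', hy', hz'⟩
    · exact .inl (eq_of_checkerboard_eq_of_mem hx hy hz hx' hy' hz' h)
    · exact .inr (eq_of_checkerboard_eq_of_mem hx hy hz hx' hy' hz'
        (h.trans (checkerboard_compl I' J' K').symm))
  · rintro (⟨rfl, rfl, rfl⟩ | ⟨rfl, rfl, rfl⟩)
    · rfl
    · exact checkerboard_compl I' J' K'

end Checkerboard

section Counting

variable {X : Type*} [Fintype X]

theorem ncard_setOf_nonempty_ne_univ [Nonempty X] :
    {J : Set X | J.Nonempty ∧ J ≠ univ}.ncard = 2 ^ Fintype.card X - 2 := by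
  have hset : {J : Set X | J.Nonempty ∧ J ≠ univ} = univ \ {∅, univ} := by
    ext J
    simp [nonempty_iff_ne_empty]
  rw [hset, ncard_sdiff (subset_univ _), ncard_univ, ncard_pair empty_ne_univ,
    Nat.card_eq_fintype_card, Fintype.card_set]

theorem two_mul_ncard_setOf_mem_ne_univ (x : X) :
    2 * {I : Set X | x ∈ I ∧ I ≠ univ}.ncard = 2 ^ Fintype.card X - 2 := by
  have : Nonempty X := ⟨x⟩
  set A := {I : Set X | x ∈ I ∧ I ≠ univ}
  have himage : compl '' A = {I : Set X | x ∉ I ∧ I.Nonempty} := by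
    simp only [A, compl_image_ofPred, mem_compl_iff, compl_ne_univ]
  have hunion : A ∪ compl '' A = {J : Set X | J.Nonempty ∧ J ≠ univ} := by
    rw [himage]
    ext I
    by_cases hx : x ∈ I
    · simp [A, hx, show I.Nonempty from ⟨x, hx⟩]
    · simpa [A, hx, ne_univ_iff_exists_notMem] using fun _ => ⟨x, hx⟩
  have hdisj : Disjoint A (compl '' A) := by
    rw [himage, disjoint_left]
    exact fun I hI hI' => hI'.1 hI.1
  rw [← ncard_setOf_nonempty_ne_univ, ← hunion, ncard_union_eq hdisj,
    compl_injective.injOn.ncard_image, two_mul]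

end Counting

section CheckerboardCount

variable {α β γ : Type*}

theorem setOf_checkerboard_eq_image (x : α) :
    {S : Set (α × β × γ) | ∃ I J K, I.Nonempty ∧ I ≠ univ ∧ J.Nonempty ∧ J ≠ univ ∧
        K.Nonempty ∧ K ≠ univ ∧ S = checkerboard I J K} =
      (fun p => checkerboard p.1 p.2.1 p.2.2) ''
        ({I | x ∈ I ∧ I ≠ univ} ×ˢ {J | J.Nonempty ∧ J ≠ univ} ×ˢ {K | K.Nonempty ∧ K ≠ univ}) := by
  ext S
  constructor
  · rintro ⟨I, J, K, hI, hIu, hJ, hJu, hK, hKu, rfl⟩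
    by_cases hx : x ∈ I
    · exact ⟨(I, J, K), ⟨⟨hx, hIu⟩, ⟨hJ, hJu⟩, ⟨hK, hKu⟩⟩, rfl⟩
    · refine ⟨(Iᶜ, Jᶜ, Kᶜ), ⟨⟨hx, compl_ne_univ.2 hI⟩, ?_, ?_⟩, checkerboard_compl I J K⟩
      · exact ⟨nonempty_compl.2 hJu, compl_ne_univ.2 hJ⟩
      · exact ⟨nonempty_compl.2 hKu, compl_ne_univ.2 hK⟩
  · rintro ⟨⟨I, J, K⟩, ⟨⟨hx, hIu⟩, ⟨hJ, hJu⟩, ⟨hK, hKu⟩⟩, rfl⟩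
    exact ⟨I, J, K, ⟨x, hx⟩, hIu, hJ, hJu, hK, hKu, rfl⟩

theorem injOn_checkerboard (x : α) :
    InjOn (fun p : Set α × Set β × Set γ => checkerboard p.1 p.2.1 p.2.2)
      ({I | x ∈ I} ×ˢ {J | J.Nonempty} ×ˢ {K | K.Nonempty}) := by
  rintro ⟨I, J, K⟩ ⟨hx : x ∈ I, hJ : J.Nonempty, hK : K.Nonempty⟩
    ⟨I', J', K'⟩ ⟨hx' : x ∈ I', -, -⟩ h
  rcases (checkerboard_eq_checkerboard_iff ⟨x, hx⟩ hJ hK).1 h with ⟨rfl, rfl, rfl⟩ | ⟨rfl, -, -⟩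
  · rfl
  · exact absurd hx' hx

theorem ncard_setOf_checkerboard [Fintype α] [Fintype β] [Fintype γ]
    [Nonempty α] [Nonempty β] [Nonempty γ] :
    {S : Set (α × β × γ) | ∃ I J K, I.Nonempty ∧ I ≠ univ ∧ J.Nonempty ∧ J ≠ univ ∧
        K.Nonempty ∧ K ≠ univ ∧ S = checkerboard I J K}.ncard =
      (2 ^ Fintype.card α - 2) * (2 ^ Fintype.card β - 2) * (2 ^ Fintype.card γ - 2) / 2 := by
  obtain ⟨x⟩ := ‹Nonempty α›
  rw [setOf_checkerboard_eq_image x, InjOn.ncard_image, ncard_prod, ncard_prod,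
    ncard_setOf_nonempty_ne_univ, ncard_setOf_nonempty_ne_univ, ← two_mul_ncard_setOf_mem_ne_univ x,
    mul_assoc, mul_assoc, Nat.mul_div_cancel_left _ two_pos]
  exact (injOn_checkerboard x).mono <|
    prod_mono (fun _ => And.left) (prod_mono (fun _ => And.left) fun _ => And.left)

end CheckerboardCount

/-- A checkerboard set `(I ×ˢ J ×ˢ K) ∪ (Iᶜ ×ˢ Jᶜ ×ˢ Kᶜ)` built from nonempty proper
subsets determines the triple `(I, J, K)` up to simultaneous complementation; in
particular, for pairwise coprime `a, b, c ≥ 2`, the number of distinct checkerboard subsets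
of `ZMod a × ZMod b × ZMod c` is `(2^a - 2)(2^b - 2)(2^c - 2)/2`. -/
theorem checkerboard_sets_classification :
    (∀ {α β γ : Type} (I I' : Set α) (J J' : Set β) (K K' : Set γ),
      I.Nonempty → I ≠ Set.univ → I'.Nonempty → I' ≠ Set.univ →
      J.Nonempty → J ≠ Set.univ → J'.Nonempty → J' ≠ Set.univ →
      K.Nonempty → K ≠ Set.univ → K'.Nonempty → K' ≠ Set.univ →
      (I ×ˢ (J ×ˢ K)) ∪ (Iᶜ ×ˢ (Jᶜ ×ˢ Kᶜ)) = (I' ×ˢ (J' ×ˢ K')) ∪ (I'ᶜ ×ˢ (J'ᶜ ×ˢ K'ᶜ)) →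
      (I = I' ∧ J = J' ∧ K = K') ∨ (I = I'ᶜ ∧ J = J'ᶜ ∧ K = K'ᶜ)) ∧
    (∀ a b c : ℕ, 2 ≤ a → 2 ≤ b → 2 ≤ c →
      Nat.Coprime a b → Nat.Coprime a c → Nat.Coprime b c →
      Set.ncard {S : Set (ZMod a × ZMod b × ZMod c) |
          ∃ (I : Set (ZMod a)) (J : Set (ZMod b)) (K : Set (ZMod c)),
            I.Nonempty ∧ I ≠ Set.univ ∧ J.Nonempty ∧ J ≠ Set.univ ∧
            K.Nonempty ∧ K ≠ Set.univ ∧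
            S = (I ×ˢ (J ×ˢ K)) ∪ (Iᶜ ×ˢ (Jᶜ ×ˢ Kᶜ))}
        = (2 ^ a - 2) * (2 ^ b - 2) * (2 ^ c - 2) / 2) := by
  refine ⟨fun I I' J J' K K' hI _ _ _ hJ _ _ _ hK _ _ _ h =>
    (checkerboard_eq_checkerboard_iff hI hJ hK).1 h, fun a b c ha hb hc _ _ _ => ?_⟩
  have : NeZero a := ⟨by omega⟩
  have : NeZero b := ⟨by omega⟩
  have : NeZero c := ⟨by omega⟩
  simpa only [ZMod.card, checkerboard] using
    ncard_setOf_checkerboard (α := ZMod a) (β := ZMod b) (γ := ZMod c)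
end
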